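/- arXiv:2512.20768 — 9 statements merged into one kernel-verified Lean document; each statement's English description precedes it below -/
import Mathlib

section
/- Let n be a natural number and φ : (Fin n → Fin 2) → ℂ a valence-n spinor. Call a pairing of size ℓ (where 2ℓ ≤ n) any set p of ℓ pairwise disjoint pairs (j,k) of elements of Fin n with j < k. Then for every ℓ with 2ℓ ≤ n and every pairing p of size ℓ there exists a totally symmetric valence-(n−2ℓ) spinor ψ_p (a function ((Fin (n−2ℓ)) → Fin 2) → ℂ invariant under every permutation of its arguments, its slots labelled by the elements of Fin n not occurring in p, listed in increasing order) such that for every f : Fin n → Fin 2 one has φ(f) = ∑_{ℓ : 2ℓ ≤ n} ∑_{p pairing of size ℓ} (∏_{(j,k) ∈ p} ε (f j) (f k)) · ψ_p(f restricted to the unpaired indices of p); moreover the term corresponding to ℓ = 0 (the empty pairing) is the total symmetrization φ_{(A₁⋯Aₙ)} of φ. (Irreducible decomposition of a spinor of arbitrary valence.) -/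
open scoped Classical

noncomputable section

/-- The antisymmetric spinor `ε` (same components for the contravariant `ε^{AB}`). -/
def eps : Fin 2 → Fin 2 → ℂ := fun A B =>
  if A = 0 ∧ B = 1 then 1 else if A = 1 ∧ B = 0 then -1 else 0

/-- Total symmetrization of a valence-`n` spinor:
`φ_{(A₁⋯Aₙ)} = (1/n!) ∑_{σ} φ(A_{σ1},…,A_{σn})`. -/
def symmetrize (n : ℕ) (φ : (Fin n → Fin 2) → ℂ) : (Fin n → Fin 2) → ℂ :=
  fun f => (1 / (n.factorial : ℂ)) * ∑ σ : Equiv.Perm (Fin n), φ (f ∘ σ)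

/-- A valence-`m` spinor is totally symmetric if it is invariant under every
permutation of its arguments. -/
def TotallySymmetric {m : ℕ} (ψ : (Fin m → Fin 2) → ℂ) : Prop :=
  ∀ (σ : Equiv.Perm (Fin m)) (g : Fin m → Fin 2), ψ (g ∘ σ) = ψ g

/-- The pairings of size `ℓ` of `Fin n`: finsets of `ℓ` pairwise disjoint pairs `(j, k)`
of elements of `Fin n` with `j < k`. -/
def Pairings (n ℓ : ℕ) : Finset (Finset (Fin n × Fin n)) :=
  Finset.univ.filter fun P =>
    P.card = ℓ ∧ (∀ p ∈ P, p.1 < p.2) ∧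
      ∀ p ∈ P, ∀ q ∈ P, p ≠ q →
        p.1 ≠ q.1 ∧ p.1 ≠ q.2 ∧ p.2 ≠ q.1 ∧ p.2 ≠ q.2

/-- The indices of `Fin n` occurring in (some pair of) `P`. -/
def support {n : ℕ} (P : Finset (Fin n × Fin n)) : Finset (Fin n) :=
  P.image Prod.fst ∪ P.image Prod.snd

/-- The unpaired indices of `P`. -/
def freeSet {n : ℕ} (P : Finset (Fin n × Fin n)) : Finset (Fin n) := (support P)ᶜ

/-- The increasing enumeration of the unpaired indices of a pairing `P` of size `ℓ`
(the `i`-th element, in increasing order, of `Fin n ∖ support P`). -/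
def enum {n : ℕ} (ℓ : ℕ) (P : Finset (Fin n × Fin n)) (i : Fin (n - 2 * ℓ)) : Fin n :=
  ((freeSet P).sort (· ≤ ·)).getD (i : ℕ)
    ⟨0, Nat.lt_of_lt_of_le i.pos (Nat.sub_le n (2 * ℓ))⟩

lemma fin2_cases (v : Fin 2) : v = 0 ∨ v = 1 := by omega

lemma eps_neg (A B : Fin 2) : eps A B = - eps B A := by
  fin_cases A <;> fin_cases B <;> simp [eps]

lemma mem_pairings {n ℓ : ℕ} {P : Finset (Fin n × Fin n)} :
    P ∈ Pairings n ℓ ↔ P.card = ℓ ∧ (∀ p ∈ P, p.1 < p.2) ∧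
      ∀ p ∈ P, ∀ q ∈ P, p ≠ q →
        p.1 ≠ q.1 ∧ p.1 ≠ q.2 ∧ p.2 ≠ q.1 ∧ p.2 ≠ q.2 := by
  simp [Pairings]

lemma pairings_zero (n : ℕ) : Pairings n 0 = {(∅ : Finset (Fin n × Fin n))} := by
  ext P
  simp only [mem_pairings, Finset.mem_singleton, Finset.card_eq_zero]
  constructor
  · rintro ⟨h, -, -⟩; exact h
  · rintro rfl; simp

lemma card_support {n ℓ : ℕ} {P : Finset (Fin n × Fin n)} (hP : P ∈ Pairings n ℓ) :
    (support P).card = 2 * ℓ := by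
  obtain ⟨hcard, hlt, hdisj⟩ := mem_pairings.mp hP
  have h1 : (P.image Prod.fst).card = ℓ := by
    rw [Finset.card_image_of_injOn, hcard]
    intro p hp q hq hpq
    by_contra hne
    exact (hdisj p hp q hq hne).1 hpq
  have h2 : (P.image Prod.snd).card = ℓ := by
    rw [Finset.card_image_of_injOn, hcard]
    intro p hp q hq hpq
    by_contra hne
    exact (hdisj p hp q hq hne).2.2.2 hpq
  have hd : Disjoint (P.image Prod.fst) (P.image Prod.snd) := by
    rw [Finset.disjoint_left]
    rintro x hx1 hx2
    obtain ⟨p, hp, rfl⟩ := Finset.mem_image.mp hx1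
    obtain ⟨q, hq, hqx⟩ := Finset.mem_image.mp hx2
    by_cases hpq : p = q
    · subst hpq; exact absurd hqx (ne_of_gt (hlt p hp))
    · exact (hdisj p hp q hq hpq).2.1 hqx.symm
  rw [support, Finset.card_union_of_disjoint hd, h1, h2]
  omega

lemma card_freeSet {n ℓ : ℕ} {P : Finset (Fin n × Fin n)} (hP : P ∈ Pairings n ℓ) :
    (freeSet P).card = n - 2 * ℓ := by
  rw [freeSet, Finset.card_compl, card_support hP, Fintype.card_fin]

lemma two_mul_le {n ℓ : ℕ} {P : Finset (Fin n × Fin n)} (hP : P ∈ Pairings n ℓ) :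
    2 * ℓ ≤ n := by
  have := card_support hP
  have h2 : (support P).card ≤ n := by
    simpa using Finset.card_le_univ (support P)
  omega

lemma enum_eq_orderEmbOfFin {n ℓ : ℕ} {P : Finset (Fin n × Fin n)}
    (h : (freeSet P).card = n - 2 * ℓ) (i : Fin (n - 2 * ℓ)) :
    enum ℓ P i = (freeSet P).orderEmbOfFin h i := by
  rw [Finset.orderEmbOfFin_apply, enum]
  rw [List.getD_eq_getElem _ _ (by rw [Finset.length_sort, h]; exact i.isLt)]
  simp [Fin.getElem_fin]

lemma enum_mem {n ℓ : ℕ} {P : Finset (Fin n × Fin n)}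
    (h : (freeSet P).card = n - 2 * ℓ) (i : Fin (n - 2 * ℓ)) :
    enum ℓ P i ∈ freeSet P := by
  rw [enum_eq_orderEmbOfFin h]; exact Finset.orderEmbOfFin_mem _ h i

lemma enum_strictMono {n ℓ : ℕ} {P : Finset (Fin n × Fin n)}
    (h : (freeSet P).card = n - 2 * ℓ) : StrictMono (enum ℓ P) := by
  have : enum ℓ P = fun i => (freeSet P).orderEmbOfFin h i := funext (enum_eq_orderEmbOfFin h)
  rw [this]
  exact ((freeSet P).orderEmbOfFin h).strictMono

lemma support_empty (n : ℕ) : support (∅ : Finset (Fin n × Fin n)) = ∅ := by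
  simp [support]

lemma enum_zero_empty {n : ℕ} (i : Fin (n - 2 * 0)) :
    enum 0 (∅ : Finset (Fin n × Fin n)) i = i := by
  have hfree : freeSet (∅ : Finset (Fin n × Fin n)) = Finset.univ := by
    simp [freeSet, support_empty]
  rw [enum, hfree, Fin.sort_univ]
  have hi : (i : ℕ) < (List.finRange n).length := by
    rw [List.length_finRange]; exact lt_of_lt_of_le i.isLt (Nat.sub_le _ _)
  rw [List.getD_eq_getElem _ _ hi, List.getElem_finRange]
  ext; simp


lemma symmetrize_totallySymmetric (n : ℕ) (φ : (Fin n → Fin 2) → ℂ) :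
    TotallySymmetric (symmetrize n φ) := by
  intro σ g
  unfold symmetrize
  congr 1
  refine Fintype.sum_equiv (Equiv.mulLeft σ) _ _ (fun τ => ?_)
  rfl

lemma symmetrize_of_totallySymmetric {n : ℕ} {χ : (Fin n → Fin 2) → ℂ}
    (h : TotallySymmetric χ) (f : Fin n → Fin 2) : symmetrize n χ f = χ f := by
  unfold symmetrize
  have : ∀ σ : Equiv.Perm (Fin n), χ (f ∘ σ) = χ f := fun σ => h σ f
  rw [Finset.sum_congr rfl (fun σ _ => this σ), Finset.sum_const, Finset.card_univ,
    Fintype.card_perm, Fintype.card_fin, nsmul_eq_mul]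
  have hne : ((n.factorial : ℂ)) ≠ 0 := (Nat.cast_ne_zero (R := ℂ)).mpr n.factorial_ne_zero
  field_simp

lemma sub_symmetrize (n : ℕ) (φ : (Fin n → Fin 2) → ℂ) (f : Fin n → Fin 2) :
    φ f - symmetrize n φ f =
      (1 / (n.factorial : ℂ)) * ∑ σ : Equiv.Perm (Fin n), (φ f - φ (f ∘ σ)) := by
  unfold symmetrize
  rw [Finset.sum_sub_distrib, Finset.sum_const, Finset.card_univ, Fintype.card_perm,
    Fintype.card_fin, nsmul_eq_mul]
  have hne : ((n.factorial : ℂ)) ≠ 0 := (Nat.cast_ne_zero (R := ℂ)).mpr n.factorial_ne_zero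
  field_simp

def GenSet (n : ℕ) : Set ((Fin n → Fin 2) → ℂ) :=
  {F | ∃ (a b : Fin n) (c : (Fin n → Fin 2) → ℂ), a < b ∧
    (∀ f g : Fin n → Fin 2, (∀ x, x ≠ a → x ≠ b → f x = g x) → c f = c g) ∧
    F = fun f => eps (f a) (f b) * c f}

lemma gen_mem_span {n : ℕ} (a b : Fin n) (hab : a ≠ b) (c : (Fin n → Fin 2) → ℂ)
    (hc : ∀ f g : Fin n → Fin 2, (∀ x, x ≠ a → x ≠ b → f x = g x) → c f = c g) :
    (fun f : Fin n → Fin 2 => eps (f a) (f b) * c f) ∈ Submodule.span ℂ (GenSet n) := by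
  rcases lt_or_gt_of_ne hab with h | h
  · exact Submodule.subset_span ⟨a, b, c, h, hc, rfl⟩
  · have : (fun f : Fin n → Fin 2 => eps (f a) (f b) * c f)
        = fun f : Fin n → Fin 2 => eps (f b) (f a) * (-(c f)) := by
      funext f; rw [eps_neg]; ring
    rw [this]
    refine Submodule.subset_span ⟨b, a, fun f => -(c f), h, ?_, rfl⟩
    intro f g hfg
    dsimp only
    rw [hc f g (fun x hx1 hx2 => hfg x hx2 hx1)]

lemma precomp_mem_span {n : ℕ} (σ : Equiv.Perm (Fin n)) {F : (Fin n → Fin 2) → ℂ}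
    (hF : F ∈ Submodule.span ℂ (GenSet n)) :
    (fun f : Fin n → Fin 2 => F (f ∘ σ)) ∈ Submodule.span ℂ (GenSet n) := by
  induction hF using Submodule.span_induction with
  | mem F hFmem =>
    obtain ⟨a, b, c, hab, hc, rfl⟩ := hFmem
    have : (fun f : Fin n → Fin 2 => (fun g => eps (g a) (g b) * c g) (f ∘ σ))
        = fun f : Fin n → Fin 2 => eps (f (σ a)) (f (σ b)) * c (f ∘ σ) := rfl
    rw [this]
    refine gen_mem_span (σ a) (σ b) (fun h => hab.ne (σ.injective h)) _ ?_
    intro f g hfg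
    refine hc _ _ (fun x hx1 hx2 => ?_)
    exact hfg (σ x) (fun h => hx1 (σ.injective h)) (fun h => hx2 (σ.injective h))
  | zero =>
    have : (fun f : Fin n → Fin 2 => (0 : (Fin n → Fin 2) → ℂ) (f ∘ σ)) = 0 := rfl
    rw [this]; exact Submodule.zero_mem _
  | add x y hx hy ihx ihy =>
    have : (fun f : Fin n → Fin 2 => (x + y) (f ∘ σ))
        = (fun f : Fin n → Fin 2 => x (f ∘ σ)) + fun f => y (f ∘ σ) := rfl
    rw [this]; exact Submodule.add_mem _ ihx ihy
  | smul r x hx ihx =>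
    have : (fun f : Fin n → Fin 2 => (r • x) (f ∘ σ))
        = r • fun f : Fin n → Fin 2 => x (f ∘ σ) := rfl
    rw [this]; exact Submodule.smul_mem _ _ ihx

lemma swap_diff_mem_span {n : ℕ} (φ : (Fin n → Fin 2) → ℂ) (a b : Fin n) (hab : a ≠ b) :
    (fun f : Fin n → Fin 2 => φ f - φ (f ∘ Equiv.swap a b)) ∈ Submodule.span ℂ (GenSet n) := by
  set c : (Fin n → Fin 2) → ℂ := fun f =>
    φ (Function.update (Function.update f a 0) b 1)
      - φ ((Function.update (Function.update f a 0) b 1) ∘ Equiv.swap a b) with hcdef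
  have hc : ∀ f g : Fin n → Fin 2, (∀ x, x ≠ a → x ≠ b → f x = g x) → c f = c g := by
    intro f g hfg
    have : Function.update (Function.update f a 0) b 1
        = Function.update (Function.update g a 0) b 1 := by
      funext x
      rcases eq_or_ne x b with rfl | hxb
      · simp
      · rcases eq_or_ne x a with rfl | hxa
        · simp [Function.update_of_ne hxb]
        · simp [Function.update_of_ne hxb, Function.update_of_ne hxa, hfg x hxa hxb]
    simp only [hcdef]
    rw [this]
  have key : (fun f : Fin n → Fin 2 => φ f - φ (f ∘ Equiv.swap a b))
      = fun f => eps (f a) (f b) * c f := by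
    funext f
    have hswap_self : f ∘ Equiv.swap a b ∘ Equiv.swap a b = f := by
      funext x; simp [Function.comp, Equiv.swap_apply_self]
    rcases fin2_cases (f a) with hfa | hfa <;> rcases fin2_cases (f b) with hfb | hfb
    · have : f ∘ Equiv.swap a b = f := by
        funext x
        rcases eq_or_ne x a with rfl | hxa
        · simp [Function.comp, Equiv.swap_apply_left, hfa, hfb]
        rcases eq_or_ne x b with rfl | hxb
        · simp [Function.comp, Equiv.swap_apply_right, hfa, hfb]
        · simp [Function.comp, Equiv.swap_apply_of_ne_of_ne hxa hxb]
      rw [this, hfa, hfb]; simp [eps]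
    · -- (0,1) : update = f
      have hupd : Function.update (Function.update f a 0) b 1 = f := by
        funext x
        rcases eq_or_ne x b with rfl | hxb
        · simp [hfb]
        rcases eq_or_ne x a with rfl | hxa
        · simp [Function.update_of_ne hxb, hfa]
        · simp [Function.update_of_ne hxb, Function.update_of_ne hxa]
      simp only [hcdef, hupd]
      rw [hfa, hfb]; simp [eps]
    · -- (1,0) : update = f ∘ swap
      have hupd : Function.update (Function.update f a 0) b 1 = f ∘ Equiv.swap a b := by
        funext x
        rcases eq_or_ne x b with rfl | hxb
        · simp [Function.comp, Equiv.swap_apply_right, hfa]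
        rcases eq_or_ne x a with rfl | hxa
        · simp [Function.update_of_ne hxb, Function.comp, Equiv.swap_apply_left, hfb]
        · simp [Function.update_of_ne hxb, Function.update_of_ne hxa, Function.comp,
            Equiv.swap_apply_of_ne_of_ne hxa hxb]
      simp only [hcdef, hupd]
      rw [show (f ∘ ⇑(Equiv.swap a b)) ∘ ⇑(Equiv.swap a b) = f from hswap_self]
      rw [hfa, hfb]; simp [eps]
    · have : f ∘ Equiv.swap a b = f := by
        funext x
        rcases eq_or_ne x a with rfl | hxa
        · simp [Function.comp, Equiv.swap_apply_left, hfa, hfb]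
        rcases eq_or_ne x b with rfl | hxb
        · simp [Function.comp, Equiv.swap_apply_right, hfa, hfb]
        · simp [Function.comp, Equiv.swap_apply_of_ne_of_ne hxa hxb]
      rw [this, hfa, hfb]; simp [eps]
  rw [key]
  exact gen_mem_span a b hab c hc

lemma perm_diff_mem_span {n : ℕ} (σ : Equiv.Perm (Fin n)) : ∀ (φ : (Fin n → Fin 2) → ℂ),
    (fun f : Fin n → Fin 2 => φ f - φ (f ∘ σ)) ∈ Submodule.span ℂ (GenSet n) := by
  refine Equiv.Perm.swap_induction_on σ ?_ ?_
  ·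
    intro φ
    have : (fun f : Fin n → Fin 2 => φ f - φ (f ∘ (1 : Equiv.Perm (Fin n)))) = 0 := by
      funext f; simp [Function.comp]
    rw [this]; exact Submodule.zero_mem _
  ·
    intro π x y hxy ih φ
    have hdecomp : (fun f : Fin n → Fin 2 => φ f - φ (f ∘ ⇑(Equiv.swap x y * π)))
        = (fun f : Fin n → Fin 2 => φ f - φ (f ∘ Equiv.swap x y))
          + fun f : Fin n → Fin 2 =>
              (fun g : Fin n → Fin 2 => φ g - φ (g ∘ π)) (f ∘ Equiv.swap x y) := by
      funext f; simp only [Pi.add_apply]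
      have : f ∘ (Equiv.swap x y * π) = (f ∘ Equiv.swap x y) ∘ π := rfl
      rw [this]; ring
    rw [hdecomp]
    exact Submodule.add_mem _ (swap_diff_mem_span φ x y hxy)
      (precomp_mem_span (Equiv.swap x y) (ih φ))

def DecompP (n : ℕ) (φ : (Fin n → Fin 2) → ℂ) : Prop :=
  ∃ ψ : (ℓ : ℕ) → Finset (Fin n × Fin n) → ((Fin (n - 2 * ℓ) → Fin 2) → ℂ),
    (∀ ℓ, 2 * ℓ ≤ n → ∀ P ∈ Pairings n ℓ, TotallySymmetric (ψ ℓ P)) ∧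
    (∀ f : Fin n → Fin 2,
      φ f = ∑ ℓ ∈ Finset.range (n / 2 + 1), ∑ P ∈ Pairings n ℓ,
        (∏ pr ∈ P, eps (f pr.1) (f pr.2)) * ψ ℓ P (fun i => f (enum ℓ P i))) ∧
    (∀ f : Fin n → Fin 2,
      ψ 0 (∅ : Finset (Fin n × Fin n)) (fun i => f (enum 0 ∅ i)) = symmetrize n φ f)

lemma symmetrize_zero (n : ℕ) (f : Fin n → Fin 2) :
    symmetrize n (0 : (Fin n → Fin 2) → ℂ) f = 0 := by
  simp [symmetrize]

lemma decompP_zero (n : ℕ) : DecompP n 0 := by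
  refine ⟨fun ℓ P => 0, fun ℓ h2 P hP => fun σ g => rfl, fun f => ?_, fun f => ?_⟩
  · simp
  · simp [symmetrize_zero]

lemma decompP_add {n : ℕ} {φ₁ φ₂ : (Fin n → Fin 2) → ℂ}
    (h1 : DecompP n φ₁) (h2 : DecompP n φ₂) : DecompP n (φ₁ + φ₂) := by
  obtain ⟨ψ₁, hs1, he1, hz1⟩ := h1
  obtain ⟨ψ₂, hs2, he2, hz2⟩ := h2
  refine ⟨fun ℓ P g => ψ₁ ℓ P g + ψ₂ ℓ P g, ?_, ?_, ?_⟩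
  · intro ℓ hle P hP σ g
    simp only [hs1 ℓ hle P hP σ g, hs2 ℓ hle P hP σ g]
  · intro f
    simp only [Pi.add_apply, he1 f, he2 f, mul_add, Finset.sum_add_distrib]
  · intro f
    have : symmetrize n (φ₁ + φ₂) f = symmetrize n φ₁ f + symmetrize n φ₂ f := by
      simp [symmetrize, Finset.sum_add_distrib, mul_add]
    rw [this, ← hz1 f, ← hz2 f]

lemma decompP_smul {n : ℕ} (a : ℂ) {φ : (Fin n → Fin 2) → ℂ}
    (h : DecompP n φ) : DecompP n (a • φ) := by
  obtain ⟨ψ, hs, he, hz⟩ := h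
  refine ⟨fun ℓ P g => a * ψ ℓ P g, ?_, ?_, ?_⟩
  · intro ℓ hle P hP σ g
    simp only [hs ℓ hle P hP σ g]
  · intro f
    simp only [Pi.smul_apply, smul_eq_mul, he f, Finset.mul_sum]
    refine Finset.sum_congr rfl fun ℓ _ => Finset.sum_congr rfl fun P _ => by ring
  · intro f
    have : symmetrize n (a • φ) f = a * symmetrize n φ f := by
      simp only [symmetrize, Pi.smul_apply, smul_eq_mul, Finset.mul_sum]
      exact Finset.sum_congr rfl fun σ _ => by ring
    rw [this, ← hz f]

lemma decompP_symmetrize (n : ℕ) (φ : (Fin n → Fin 2) → ℂ) :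
    DecompP n (symmetrize n φ) := by
  refine ⟨fun ℓ => match ℓ with
    | 0 => fun P => if P = ∅ then symmetrize n φ else 0
    | _ + 1 => fun _ => 0, ?_, ?_, ?_⟩
  · intro ℓ hle P hP
    match ℓ with
    | 0 =>
      rcases eq_or_ne P ∅ with rfl | hne
      · simpa using symmetrize_totallySymmetric n φ
      · simp only [if_neg hne]
        intro σ g; rfl
    | r + 1 => intro σ g; rfl
  · intro f
    rw [Finset.sum_range_succ']
    show symmetrize n φ f =
      (∑ k ∈ Finset.range (n / 2), ∑ P ∈ Pairings n (k + 1),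
        (∏ pr ∈ P, eps (f pr.1) (f pr.2)) * (0:ℂ)) +
      ∑ P ∈ Pairings n 0,
        (∏ pr ∈ P, eps (f pr.1) (f pr.2)) *
          (if P = ∅ then symmetrize n φ else 0) (fun i => f (enum 0 P i))
    rw [pairings_zero, Finset.sum_singleton]
    simp only [mul_zero, Finset.sum_const_zero, zero_add, Finset.prod_empty, one_mul,
      if_pos rfl]
    congr 1
    funext i
    rw [enum_zero_empty]
  · intro f
    show (if (∅ : Finset (Fin n × Fin n)) = ∅ then symmetrize n φ else 0)
        (fun i => f (enum 0 (∅ : Finset (Fin n × Fin n)) i)) = symmetrize n (symmetrize n φ) f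
    rw [if_pos rfl, symmetrize_of_totallySymmetric (symmetrize_totallySymmetric n φ)]
    congr 1
    funext i
    rw [enum_zero_empty]

lemma symmetrize_gen_zero {n : ℕ} (a b : Fin n) (hab : a ≠ b)
    (c : (Fin n → Fin 2) → ℂ)
    (hc : ∀ f g : Fin n → Fin 2, (∀ x, x ≠ a → x ≠ b → f x = g x) → c f = c g)
    (f : Fin n → Fin 2) :
    symmetrize n (fun f => eps (f a) (f b) * c f) f = 0 := by
  unfold symmetrize
  set F : (Fin n → Fin 2) → ℂ := fun g => eps (g a) (g b) * c g with hF
  have hFneg : ∀ g : Fin n → Fin 2, F (g ∘ Equiv.swap a b) = - F g := by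
    intro g
    have h1 : (g ∘ Equiv.swap a b) a = g b := by simp [Function.comp]
    have h2 : (g ∘ Equiv.swap a b) b = g a := by simp [Function.comp]
    have h3 : c (g ∘ Equiv.swap a b) = c g := by
      refine hc _ _ fun x hx1 hx2 => ?_
      simp [Function.comp, Equiv.swap_apply_of_ne_of_ne hx1 hx2]
    simp only [hF, h1, h2, h3]
    rw [eps_neg]; ring
  have key : (∑ σ : Equiv.Perm (Fin n), F (f ∘ σ))
      = - ∑ σ : Equiv.Perm (Fin n), F (f ∘ σ) := by
    have hre : ∑ σ : Equiv.Perm (Fin n), F (f ∘ ⇑(σ * Equiv.swap a b))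
        = ∑ σ : Equiv.Perm (Fin n), F (f ∘ ⇑σ) :=
      Fintype.sum_equiv (Equiv.mulRight (Equiv.swap a b)) _ _ (fun σ => rfl)
    conv_lhs => rw [← hre]
    rw [← Finset.sum_neg_distrib]
    refine Finset.sum_congr rfl fun σ _ => ?_
    rw [← hFneg (f ∘ ⇑σ)]
    refine congrArg F ?_
    funext x
    simp [Function.comp, Equiv.Perm.mul_apply]
  have : (∑ σ : Equiv.Perm (Fin n), F (f ∘ σ)) = 0 := by linear_combination key / 2
  rw [this, mul_zero]


lemma mem_support_iff {n : ℕ} {P : Finset (Fin n × Fin n)} {x : Fin n} :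
    x ∈ support P ↔ ∃ p ∈ P, p.1 = x ∨ p.2 = x := by
  simp only [support, Finset.mem_union, Finset.mem_image]
  constructor
  · rintro (⟨p, hp, rfl⟩ | ⟨p, hp, rfl⟩)
    · exact ⟨p, hp, Or.inl rfl⟩
    · exact ⟨p, hp, Or.inr rfl⟩
  · rintro ⟨p, hp, rfl | rfl⟩
    · exact Or.inl ⟨p, hp, rfl⟩
    · exact Or.inr ⟨p, hp, rfl⟩

set_option maxHeartbeats 2000000 in
lemma decompP_gen (n : ℕ)
    (IH : ∀ m, m < n → ∀ χ : (Fin m → Fin 2) → ℂ, DecompP m χ)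
    (a b : Fin n) (hab : a < b) (c : (Fin n → Fin 2) → ℂ)
    (hc : ∀ f g : Fin n → Fin 2, (∀ x, x ≠ a → x ≠ b → f x = g x) → c f = c g) :
    DecompP n (fun f => eps (f a) (f b) * c f) := by
  have hne : a ≠ b := ne_of_lt hab
  have hn : 2 ≤ n := by
    have h1 : (a : ℕ) < (b : ℕ) := hab
    have h2 : (b : ℕ) < n := b.isLt
    omega
  set T : Finset (Fin n) := ({a, b} : Finset (Fin n))ᶜ with hT
  have hTcard : T.card = n - 2 := by
    rw [hT, Finset.card_compl, Finset.card_pair hne, Fintype.card_fin]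
  set e : Fin (n - 2) ↪o Fin n := T.orderEmbOfFin hTcard with he
  have he_memT : ∀ i, e i ∈ T := fun i => Finset.orderEmbOfFin_mem T hTcard i
  have hT_ne : ∀ x ∈ T, x ≠ a ∧ x ≠ b := by
    intro x hx
    rw [hT, Finset.mem_compl, Finset.mem_insert, Finset.mem_singleton] at hx
    exact ⟨fun h => hx (Or.inl h), fun h => hx (Or.inr h)⟩
  have he_ne_a : ∀ i, e i ≠ a := fun i => (hT_ne _ (he_memT i)).1
  have he_ne_b : ∀ i, e i ≠ b := fun i => (hT_ne _ (he_memT i)).2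
  have he_surj : ∀ x ∈ T, ∃ i, e i = x := by
    intro x hx
    have : x ∈ Set.range ⇑e := by
      rw [he, Finset.range_orderEmbOfFin]; exact hx
    exact this
  have he_inj : Function.Injective ⇑e := e.injective
  -- the extension of a spinor on the free indices by zero
  set ext : (Fin (n - 2) → Fin 2) → (Fin n → Fin 2) := fun g x =>
    if hx : x ∈ T then g ((T.orderIsoOfFin hTcard).symm ⟨x, hx⟩) else 0 with hext
  set c' : (Fin (n - 2) → Fin 2) → ℂ := fun g => c (ext g) with hc'
  have hc'e : ∀ f : Fin n → Fin 2, c' (f ∘ ⇑e) = c f := by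
    intro f
    refine hc _ _ fun x hxa hxb => ?_
    have hx : x ∈ T := by
      rw [hT, Finset.mem_compl, Finset.mem_insert, Finset.mem_singleton]
      rintro (h | h) <;> [exact hxa h; exact hxb h]
    rw [hext]
    simp only [dif_pos hx]
    show f (e ((T.orderIsoOfFin hTcard).symm ⟨x, hx⟩)) = f x
    congr 1
    have := Finset.coe_orderIsoOfFin_apply T hTcard ((T.orderIsoOfFin hTcard).symm ⟨x, hx⟩)
    rw [← this, OrderIso.apply_symm_apply]
  obtain ⟨ψ', hsym', heq', -⟩ := IH (n - 2) (by omega) c'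
  set ee : Fin (n - 2) × Fin (n - 2) → Fin n × Fin n := Prod.map ⇑e ⇑e with hee
  have hee_inj : Function.Injective ee := by
    intro p q h
    exact Prod.ext (he_inj (congrArg Prod.fst h)) (he_inj (congrArg Prod.snd h))
  set ι : Finset (Fin (n - 2) × Fin (n - 2)) → Finset (Fin n × Fin n) :=
    fun Q => insert (a, b) (Q.image ee) with hι
  have hab_notmem : ∀ Q : Finset (Fin (n - 2) × Fin (n - 2)), (a, b) ∉ Q.image ee := by
    intro Q hmem
    obtain ⟨q, -, hq⟩ := Finset.mem_image.mp hmem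
    exact he_ne_a q.1 (congrArg Prod.fst hq)
  have hι_inj : ∀ Q₁ Q₂ : Finset (Fin (n - 2) × Fin (n - 2)), ι Q₁ = ι Q₂ → Q₁ = Q₂ := by
    intro Q₁ Q₂ h
    have h' : Q₁.image ee = Q₂.image ee := by
      have e1 : (ι Q₁).erase (a, b) = Q₁.image ee := Finset.erase_insert (hab_notmem Q₁)
      have e2 : (ι Q₂).erase (a, b) = Q₂.image ee := Finset.erase_insert (hab_notmem Q₂)
      rw [← e1, ← e2, h]
    exact Finset.image_injective hee_inj h'
  have hι_mem : ∀ r, ∀ Q ∈ Pairings (n - 2) r, ι Q ∈ Pairings n (r + 1) := by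
    intro r Q hQ
    obtain ⟨hQcard, hQlt, hQdisj⟩ := mem_pairings.mp hQ
    refine mem_pairings.mpr ⟨?_, ?_, ?_⟩
    · rw [hι]
      rw [Finset.card_insert_of_notMem (hab_notmem Q), Finset.card_image_of_injective _ hee_inj,
        hQcard]
    · intro p hp
      rw [hι, Finset.mem_insert] at hp
      rcases hp with rfl | hp
      · exact hab
      · obtain ⟨q, hq, rfl⟩ := Finset.mem_image.mp hp
        exact e.strictMono (hQlt q hq)
    · intro p hp q hq hpq
      rw [hι, Finset.mem_insert] at hp hq
      rcases hp with rfl | hp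
      · rcases hq with rfl | hq
        · exact absurd rfl hpq
        · obtain ⟨q', hq', rfl⟩ := Finset.mem_image.mp hq
          exact ⟨(he_ne_a q'.1).symm, (he_ne_a q'.2).symm,
            (he_ne_b q'.1).symm, (he_ne_b q'.2).symm⟩
      · rcases hq with rfl | hq
        · obtain ⟨p', hp', rfl⟩ := Finset.mem_image.mp hp
          exact ⟨he_ne_a p'.1, he_ne_b p'.1, he_ne_a p'.2, he_ne_b p'.2⟩
        · obtain ⟨p', hp', rfl⟩ := Finset.mem_image.mp hp
          obtain ⟨q', hq', rfl⟩ := Finset.mem_image.mp hq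
          have hpq' : p' ≠ q' := fun h => hpq (congrArg ee h)
          obtain ⟨d1, d2, d3, d4⟩ := hQdisj p' hp' q' hq' hpq'
          exact ⟨fun h => d1 (he_inj h), fun h => d2 (he_inj h),
            fun h => d3 (he_inj h), fun h => d4 (he_inj h)⟩
  have hfree : ∀ Q : Finset (Fin (n - 2) × Fin (n - 2)),
      freeSet (ι Q) = (freeSet Q).image ⇑e := by
    intro Q
    ext x
    rw [freeSet, Finset.mem_compl, Finset.mem_image]
    constructor
    · intro hx
      have hxa : x ≠ a := fun h =>
        hx (mem_support_iff.mpr ⟨(a, b), Finset.mem_insert_self _ _, Or.inl h.symm⟩)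
      have hxb : x ≠ b := fun h =>
        hx (mem_support_iff.mpr ⟨(a, b), Finset.mem_insert_self _ _, Or.inr h.symm⟩)
      have hxT : x ∈ T := by
        rw [hT, Finset.mem_compl, Finset.mem_insert, Finset.mem_singleton]
        rintro (h | h) <;> [exact hxa h; exact hxb h]
      obtain ⟨y, rfl⟩ := he_surj x hxT
      refine ⟨y, ?_, rfl⟩
      rw [freeSet, Finset.mem_compl]
      intro hy
      obtain ⟨q, hq, hq'⟩ := mem_support_iff.mp hy
      refine hx (mem_support_iff.mpr ⟨ee q, ?_, ?_⟩)
      · exact Finset.mem_insert_of_mem (Finset.mem_image_of_mem ee hq)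
      · rcases hq' with h | h
        · exact Or.inl (congrArg ⇑e h)
        · exact Or.inr (congrArg ⇑e h)
    · rintro ⟨y, hy, rfl⟩
      rw [freeSet, Finset.mem_compl] at hy
      intro hmem
      obtain ⟨p, hp, hp'⟩ := mem_support_iff.mp hmem
      rw [hι, Finset.mem_insert] at hp
      rcases hp with rfl | hp
      · rcases hp' with h | h
        · exact he_ne_a y h.symm
        · exact he_ne_b y h.symm
      · obtain ⟨q, hq, rfl⟩ := Finset.mem_image.mp hp
        refine hy (mem_support_iff.mpr ⟨q, hq, ?_⟩)
        rcases hp' with h | h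
        · exact Or.inl (he_inj h)
        · exact Or.inr (he_inj h)
  have hcast : ∀ r : ℕ, (n - 2) - 2 * r = n - 2 * (r + 1) := by intro r; omega
  have henum : ∀ r, ∀ Q ∈ Pairings (n - 2) r, ∀ i : Fin ((n - 2) - 2 * r),
      enum (r + 1) (ι Q) (Fin.cast (hcast r) i) = e (enum r Q i) := by
    intro r Q hQ
    have hfQ : (freeSet Q).card = (n - 2) - 2 * r := card_freeSet hQ
    have hfP : (freeSet (ι Q)).card = n - 2 * (r + 1) := card_freeSet (hι_mem r Q hQ)
    have hfP' : (freeSet (ι Q)).card = (n - 2) - 2 * r := by rw [hfP, hcast r]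
    have h1 : (fun i : Fin ((n - 2) - 2 * r) => enum (r + 1) (ι Q) (Fin.cast (hcast r) i))
        = (freeSet (ι Q)).orderEmbOfFin hfP' := by
      refine Finset.orderEmbOfFin_unique hfP' (fun i => enum_mem hfP _) ?_
      intro i j hij
      refine enum_strictMono hfP ?_
      rw [Fin.lt_def] at hij ⊢
      simpa using hij
    have h2 : (fun i : Fin ((n - 2) - 2 * r) => e (enum r Q i))
        = (freeSet (ι Q)).orderEmbOfFin hfP' := by
      refine Finset.orderEmbOfFin_unique hfP' (fun i => ?_) ?_
      · rw [hfree Q]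
        exact Finset.mem_image_of_mem _ (enum_mem hfQ i)
      · intro i j hij
        exact e.strictMono (enum_strictMono hfQ hij)
    intro i
    rw [show enum (r + 1) (ι Q) (Fin.cast (hcast r) i)
      = (fun i : Fin ((n - 2) - 2 * r) => enum (r + 1) (ι Q) (Fin.cast (hcast r) i)) i from rfl,
      h1, ← h2]
  -- the decomposition
  refine ⟨fun ℓ => match ℓ with
    | 0 => fun _ => 0
    | r + 1 => fun P =>
      if h : ∃ Q ∈ Pairings (n - 2) r, ι Q = P then
        (fun g : Fin (n - 2 * (r + 1)) → Fin 2 =>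
          ψ' r h.choose (fun i => g (Fin.cast (hcast r) i)))
      else 0, ?_, ?_, ?_⟩
  · -- total symmetry
    intro ℓ hle P hP
    obtain _ | r := ℓ
    · intro σ g; rfl
    · show TotallySymmetric
        (if h : ∃ Q ∈ Pairings (n - 2) r, ι Q = P then
          (fun g : Fin (n - 2 * (r + 1)) → Fin 2 =>
            ψ' r h.choose (fun i => g (Fin.cast (hcast r) i)))
         else 0)
      by_cases h : ∃ Q ∈ Pairings (n - 2) r, ι Q = P
      · rw [dif_pos h]
        obtain ⟨hQmem, hQeq⟩ := h.choose_spec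
        intro σ g
        show ψ' r h.choose (fun i => (g ∘ ⇑σ) (Fin.cast (hcast r) i))
            = ψ' r h.choose (fun i => g (Fin.cast (hcast r) i))
        set σ' : Equiv.Perm (Fin ((n - 2) - 2 * r)) :=
          (finCongr (hcast r)).trans (σ.trans (finCongr (hcast r).symm)) with hσ'
        have hcomp : (fun i => (g ∘ ⇑σ) (Fin.cast (hcast r) i))
            = (fun i => g (Fin.cast (hcast r) i)) ∘ ⇑σ' := by
          funext i
          rfl
        rw [hcomp]
        exact hsym' r (two_mul_le hQmem) h.choose hQmem σ' _
      · rw [dif_neg h]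
        intro σ g; rfl

  · -- the sum formula
    intro f
    rw [Finset.sum_range_succ']
    show eps (f a) (f b) * c f =
      (∑ k ∈ Finset.range (n / 2), ∑ P ∈ Pairings n (k + 1),
        (∏ pr ∈ P, eps (f pr.1) (f pr.2)) *
          (if h : ∃ Q ∈ Pairings (n - 2) k, ι Q = P then
            (fun g : Fin (n - 2 * (k + 1)) → Fin 2 =>
              ψ' k h.choose (fun i => g (Fin.cast (hcast k) i)))
           else (0 : (Fin (n - 2 * (k + 1)) → Fin 2) → ℂ)) (fun i => f (enum (k + 1) P i))) +
      ∑ P ∈ Pairings n 0, (∏ pr ∈ P, eps (f pr.1) (f pr.2)) * (0 : ℂ)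
    simp only [mul_zero, Finset.sum_const_zero, add_zero]
    have hinner : ∀ k : ℕ,
        (∑ P ∈ Pairings n (k + 1),
          (∏ pr ∈ P, eps (f pr.1) (f pr.2)) *
            (if h : ∃ Q ∈ Pairings (n - 2) k, ι Q = P then
              (fun g : Fin (n - 2 * (k + 1)) → Fin 2 =>
                ψ' k h.choose (fun i => g (Fin.cast (hcast k) i)))
             else (0 : (Fin (n - 2 * (k + 1)) → Fin 2) → ℂ)) (fun i => f (enum (k + 1) P i)))
        = eps (f a) (f b) * ∑ Q ∈ Pairings (n - 2) k,
            (∏ q ∈ Q, eps ((f ∘ ⇑e) q.1) ((f ∘ ⇑e) q.2)) *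
              ψ' k Q (fun i => (f ∘ ⇑e) (enum k Q i)) := by
      intro k
      have hsubset : (Pairings (n - 2) k).image ι ⊆ Pairings n (k + 1) := by
        intro P hP
        obtain ⟨Q, hQ, rfl⟩ := Finset.mem_image.mp hP
        exact hι_mem k Q hQ
      have hvanish : ∀ P ∈ Pairings n (k + 1), P ∉ (Pairings (n - 2) k).image ι →
          (∏ pr ∈ P, eps (f pr.1) (f pr.2)) *
            (if h : ∃ Q ∈ Pairings (n - 2) k, ι Q = P then
              (fun g : Fin (n - 2 * (k + 1)) → Fin 2 =>
                ψ' k h.choose (fun i => g (Fin.cast (hcast k) i)))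
             else (0 : (Fin (n - 2 * (k + 1)) → Fin 2) → ℂ)) (fun i => f (enum (k + 1) P i)) = 0 := by
        intro P hP hPn
        have hno : ¬ ∃ Q ∈ Pairings (n - 2) k, ι Q = P := by
          rintro ⟨Q, hQ, rfl⟩
          exact hPn (Finset.mem_image_of_mem ι hQ)
        rw [dif_neg hno]
        show _ * (0 : ℂ) = 0
        rw [mul_zero]
      rw [← Finset.sum_subset hsubset hvanish,
        Finset.sum_image (fun Q1 _ Q2 _ h => hι_inj Q1 Q2 h), Finset.mul_sum]
      refine Finset.sum_congr rfl fun Q hQ => ?_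
      have hex : ∃ Q' ∈ Pairings (n - 2) k, ι Q' = ι Q := ⟨Q, hQ, rfl⟩
      rw [dif_pos hex]
      have hch : hex.choose = Q := hι_inj _ _ hex.choose_spec.2
      have hprod : (∏ pr ∈ ι Q, eps (f pr.1) (f pr.2))
          = eps (f a) (f b) * ∏ q ∈ Q, eps ((f ∘ ⇑e) q.1) ((f ∘ ⇑e) q.2) := by
        rw [show ι Q = insert (a, b) (Q.image ee) from rfl,
          Finset.prod_insert (hab_notmem Q),
          Finset.prod_image (fun q1 _ q2 _ h => hee_inj h)]
        rfl
      have harg : ψ' k hex.choose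
            (fun i => (fun i' => f (enum (k + 1) (ι Q) i')) (Fin.cast (hcast k) i))
          = ψ' k Q (fun i => (f ∘ ⇑e) (enum k Q i)) := by
        rw [hch]
        show ψ' k Q (fun i => f (enum (k + 1) (ι Q) (Fin.cast (hcast k) i))) = _
        congr 1
        funext i
        rw [henum k Q hQ i]
        rfl
      rw [harg, hprod]
      ring
    rw [show (∑ k ∈ Finset.range (n / 2), ∑ P ∈ Pairings n (k + 1),
        (∏ pr ∈ P, eps (f pr.1) (f pr.2)) *
          (if h : ∃ Q ∈ Pairings (n - 2) k, ι Q = P then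
            (fun g : Fin (n - 2 * (k + 1)) → Fin 2 =>
              ψ' k h.choose (fun i => g (Fin.cast (hcast k) i)))
           else (0 : (Fin (n - 2 * (k + 1)) → Fin 2) → ℂ)) (fun i => f (enum (k + 1) P i)))
      = ∑ k ∈ Finset.range (n / 2), eps (f a) (f b) * ∑ Q ∈ Pairings (n - 2) k,
            (∏ q ∈ Q, eps ((f ∘ ⇑e) q.1) ((f ∘ ⇑e) q.2)) *
              ψ' k Q (fun i => (f ∘ ⇑e) (enum k Q i))
      from Finset.sum_congr rfl fun k _ => hinner k]
    rw [← Finset.mul_sum]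
    congr 1
    rw [← hc'e f, heq' (f ∘ ⇑e), show (n - 2) / 2 + 1 = n / 2 from by omega]

  · -- the ℓ = 0 term
    intro f
    show (0 : ℂ) = symmetrize n (fun f => eps (f a) (f b) * c f) f
    exact (symmetrize_gen_zero a b hne c hc f).symm


theorem decompP_all : ∀ n, ∀ φ : (Fin n → Fin 2) → ℂ, DecompP n φ := by
  intro n
  induction n using Nat.strong_induction_on with
  | _ n IH =>
    intro φ
    have hspan : ∀ F ∈ Submodule.span ℂ (GenSet n), DecompP n F := by
      intro F hF
      induction hF using Submodule.span_induction with
      | mem F hFmem =>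
        obtain ⟨a, b, c, hab, hc, rfl⟩ := hFmem
        exact decompP_gen n IH a b hab c hc
      | zero => exact decompP_zero n
      | add x y hx hy ihx ihy => exact decompP_add ihx ihy
      | smul r x hx ihx => exact decompP_smul r ihx
    have hdiff : DecompP n (fun f => φ f - symmetrize n φ f) := by
      apply hspan
      have : (fun f : Fin n → Fin 2 => φ f - symmetrize n φ f)
          = (1 / (n.factorial : ℂ)) •
            ∑ σ : Equiv.Perm (Fin n), (fun f : Fin n → Fin 2 => φ f - φ (f ∘ σ)) := by
        funext f
        rw [sub_symmetrize]
        simp only [Pi.smul_apply, smul_eq_mul]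
        congr 1
        rw [Finset.sum_apply]
      rw [this]
      exact Submodule.smul_mem _ _ (Submodule.sum_mem _ fun σ _ => perm_diff_mem_span σ φ)
    have hsum := decompP_add (decompP_symmetrize n φ) hdiff
    have hφ : (symmetrize n φ + fun f => φ f - symmetrize n φ f) = φ := by
      funext f; simp
    rwa [hφ] at hsum


/-- Irreducible decomposition of a spinor of arbitrary valence: any valence-`n` spinor `φ`
is a sum, over all `ℓ` with `2ℓ ≤ n` and all pairings `p` of size `ℓ`, of products of
`ε`-spinors over the pairs of `p` times totally symmetric spinors `ψ_p` of valence `n − 2ℓ`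
evaluated on the unpaired indices (in increasing order); the `ℓ = 0` term (empty pairing)
is the total symmetrization of `φ`. -/
theorem irreducible_decomposition (n : ℕ) (φ : (Fin n → Fin 2) → ℂ) :
    ∃ ψ : (ℓ : ℕ) → Finset (Fin n × Fin n) → ((Fin (n - 2 * ℓ) → Fin 2) → ℂ),
      (∀ ℓ, 2 * ℓ ≤ n → ∀ P ∈ Pairings n ℓ, TotallySymmetric (ψ ℓ P)) ∧
      (∀ f : Fin n → Fin 2,
        φ f = ∑ ℓ ∈ Finset.range (n / 2 + 1), ∑ P ∈ Pairings n ℓ,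
          (∏ pr ∈ P, eps (f pr.1) (f pr.2)) * ψ ℓ P (fun i => f (enum ℓ P i))) ∧
      (∀ f : Fin n → Fin 2,
        ψ 0 (∅ : Finset (Fin n × Fin n)) (fun i => f (enum 0 ∅ i)) = symmetrize n φ f) := by
  exact decompP_all n φ

end
end

section
/- Let n be a natural number. For a valence-n spinor φ : (Fin n → Fin 2) → ℂ and a pairing q of size ℓ (a set of ℓ pairwise disjoint pairs (j,k) of elements of Fin n with j < k), define the irreducible component φ^{(q)} as the valence-(n−2ℓ) spinor obtained by contracting each pair (j,k) ∈ q of indices of φ via ∑_{a,b} ε^{a b} · φ(… index j ↦ a …, … index k ↦ b …) and then totally symmetrizing the remaining n−2ℓ indices. Then there exist complex coefficients c(p,q), depending only on n, ℓ and the pairings p, q of equal size (and not on φ), such that for every f : Fin n → Fin 2, φ(f) = ∑_{ℓ : 2ℓ ≤ n} ∑_{p pairing of size ℓ} (∏_{(j,k) ∈ p} ε (f j) (f k)) · ψ_p(f restricted to the unpaired indices of p), where ψ_p = ∑_{q pairing of size ℓ} c(p,q) · φ^{(q)}. -/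
open scoped Classical

noncomputable section

/-- Contraction of `φ` over all the pairs of the pairing `q` via `ε^{ab}`: the summand
`(∏_{(j,k) ∈ q} ε^{u_j u_k})` weights the values on the paired slots, while the product of
Kronecker deltas forces the values on the unpaired slots (enumerated in increasing order by
`enum`) to agree with the argument `g`. -/
def contract (n ℓ : ℕ) (q : Finset (Fin n × Fin n)) (φ : (Fin n → Fin 2) → ℂ)
    (g : Fin (n - 2 * ℓ) → Fin 2) : ℂ :=
  ∑ u : Fin n → Fin 2,
    (∏ pr ∈ q, eps (u pr.1) (u pr.2)) *
      (∏ i : Fin (n - 2 * ℓ), if u (enum ℓ q i) = g i then 1 else 0) * φ u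

/-- The irreducible component `φ^{(q)}`: contract each pair of indices in `q` via `ε^{ab}`
and totally symmetrize the remaining `n − 2ℓ` indices. -/
def irredComp (n ℓ : ℕ) (q : Finset (Fin n × Fin n)) (φ : (Fin n → Fin 2) → ℂ) :
    (Fin (n - 2 * ℓ) → Fin 2) → ℂ :=
  symmetrize (n - 2 * ℓ) (contract n ℓ q φ)

namespace SpinorDecomp
open Finset

abbrev Spinor (n : ℕ) := (Fin n → Fin 2) → ℂ
abbrev Op (n : ℕ) := Spinor n → Spinor n

/-! ### eps basics -/

lemma eps_swap (A B : Fin 2) : eps B A = - eps A B := by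
  fin_cases A <;> fin_cases B <;> simp [eps]

lemma eps_diag (A : Fin 2) : eps A A = 0 := by
  fin_cases A <;> simp [eps]

/-! ### patch and the fundamental swap identity -/

def patch {n : ℕ} (f : Fin n → Fin 2) (j k : Fin n) (a b : Fin 2) : Fin n → Fin 2 :=
  fun i => if i = j then a else if i = k then b else f i

lemma patch_self {n : ℕ} (f : Fin n → Fin 2) (j k : Fin n) :
    patch f j k (f j) (f k) = f := by
  funext i; unfold patch
  split_ifs with h1 h2
  · rw [h1]
  · rw [h2]
  · rfl

lemma patch_swapped {n : ℕ} (f : Fin n → Fin 2) {j k : Fin n} (h : j ≠ k) :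
    patch f j k (f k) (f j) = f ∘ Equiv.swap j k := by
  funext i; unfold patch
  by_cases h1 : i = j
  · subst h1; simp [Equiv.swap_apply_left, h]
  by_cases h2 : i = k
  · subst h2; simp [h1, Equiv.swap_apply_right]
  · simp [h1, h2, Equiv.swap_apply_of_ne_of_ne h1 h2]

lemma comp_swap_self {n : ℕ} (f : Fin n → Fin 2) {j k : Fin n} (h : f j = f k) :
    f ∘ Equiv.swap j k = f := by
  funext i
  by_cases h1 : i = j
  · simp [h1, Equiv.swap_apply_left, h]
  by_cases h2 : i = k
  · simp [h2, Equiv.swap_apply_right, h]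
  · simp [Equiv.swap_apply_of_ne_of_ne h1 h2]

lemma swap_identity {n : ℕ} (φ : Spinor n) (f : Fin n → Fin 2) {j k : Fin n} (h : j ≠ k) :
    φ f - φ (f ∘ Equiv.swap j k)
      = eps (f j) (f k) * ∑ a : Fin 2, ∑ b : Fin 2, eps a b * φ (patch f j k a b) := by
  have hsum : ∑ a : Fin 2, ∑ b : Fin 2, eps a b * φ (patch f j k a b)
      = φ (patch f j k 0 1) - φ (patch f j k 1 0) := by
    simp [Fin.sum_univ_two, eps]
    ring
  rw [hsum]
  have h2 : ∀ x : Fin 2, x = 0 ∨ x = 1 := by decide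
  rcases h2 (f j) with hj | hj <;> rcases h2 (f k) with hk | hk
  · have : f ∘ Equiv.swap j k = f := comp_swap_self f (by rw [hj, hk])
    rw [this, hj, hk]; simp [eps]
  · have e1 : patch f j k 0 1 = f := by rw [← hj, ← hk]; exact patch_self f j k
    have e2 : patch f j k 1 0 = f ∘ Equiv.swap j k := by
      rw [← hj, ← hk]; exact patch_swapped f h
    rw [e1, e2, hj, hk]; simp [eps]
  · have e1 : patch f j k 1 0 = f := by rw [← hj, ← hk]; exact patch_self f j k
    have e2 : patch f j k 0 1 = f ∘ Equiv.swap j k := by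
      rw [← hj, ← hk]; exact patch_swapped f h
    rw [e1, e2, hj, hk]; simp [eps]; try ring
  · have : f ∘ Equiv.swap j k = f := comp_swap_self f (by rw [hj, hk])
    rw [this, hj, hk]; simp [eps]

/-! ### Pairings, support, freeSet, enum -/

lemma mem_Pairings {n ℓ : ℕ} {P : Finset (Fin n × Fin n)} :
    P ∈ Pairings n ℓ ↔ P.card = ℓ ∧ (∀ p ∈ P, p.1 < p.2) ∧
      ∀ p ∈ P, ∀ q ∈ P, p ≠ q →
        p.1 ≠ q.1 ∧ p.1 ≠ q.2 ∧ p.2 ≠ q.1 ∧ p.2 ≠ q.2 := by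
  simp [Pairings]

lemma mem_support_iff {n : ℕ} {P : Finset (Fin n × Fin n)} {x : Fin n} :
    x ∈ support P ↔ ∃ pr ∈ P, x = pr.1 ∨ x = pr.2 := by
  simp only [support, Finset.mem_union, Finset.mem_image]
  constructor
  · rintro (⟨pr, hpr, rfl⟩ | ⟨pr, hpr, rfl⟩)
    · exact ⟨pr, hpr, Or.inl rfl⟩
    · exact ⟨pr, hpr, Or.inr rfl⟩
  · rintro ⟨pr, hpr, rfl | rfl⟩
    · exact Or.inl ⟨pr, hpr, rfl⟩
    · exact Or.inr ⟨pr, hpr, rfl⟩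

lemma mem_freeSet_iff {n : ℕ} {P : Finset (Fin n × Fin n)} {x : Fin n} :
    x ∈ freeSet P ↔ ∀ pr ∈ P, x ≠ pr.1 ∧ x ≠ pr.2 := by
  simp only [freeSet, Finset.mem_compl, mem_support_iff]
  push_neg
  constructor
  · intro h pr hpr; exact h pr hpr
  · intro h pr hpr; exact h pr hpr

lemma support_eq_biUnion {n : ℕ} (P : Finset (Fin n × Fin n)) :
    support P = P.biUnion (fun pr => {pr.1, pr.2}) := by
  ext x
  simp only [mem_support_iff, Finset.mem_biUnion, Finset.mem_insert, Finset.mem_singleton]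

lemma card_support {n ℓ : ℕ} {P : Finset (Fin n × Fin n)} (hP : P ∈ Pairings n ℓ) :
    (support P).card = 2 * ℓ := by
  obtain ⟨hcard, hord, hdisj⟩ := mem_Pairings.1 hP
  have hc2 : ∀ pr ∈ P, ({pr.1, pr.2} : Finset (Fin n)).card = 2 :=
    fun pr hpr => Finset.card_pair (ne_of_lt (hord pr hpr))
  rw [support_eq_biUnion, Finset.card_biUnion, Finset.sum_congr rfl hc2, Finset.sum_const,
    hcard, smul_eq_mul, mul_comm]
  · intro p hp q hq hpq
    have h4 := hdisj p hp q hq hpq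
    simp only [Finset.disjoint_left, Finset.mem_insert, Finset.mem_singleton]
    rintro x (rfl | rfl) (h | h) <;> first
      | exact h4.1 h | exact h4.2.1 h | exact h4.2.2.1 h | exact h4.2.2.2 h

lemma card_freeSet {n ℓ : ℕ} {P : Finset (Fin n × Fin n)} (hP : P ∈ Pairings n ℓ) :
    (freeSet P).card = n - 2 * ℓ := by
  rw [freeSet, Finset.card_compl, card_support hP, Fintype.card_fin]

lemma enum_eq_orderEmbOfFin {n ℓ : ℕ} {P : Finset (Fin n × Fin n)}
    (h : (freeSet P).card = n - 2 * ℓ) :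
    enum ℓ P = fun i => (freeSet P).orderEmbOfFin h i := by
  funext i
  have hlen : ((freeSet P).sort (· ≤ ·)).length = n - 2 * ℓ := by
    rw [Finset.length_sort, h]
  have hi : (i : ℕ) < ((freeSet P).sort (· ≤ ·)).length := by rw [hlen]; exact i.2
  rw [enum, List.getD_eq_getElem _ _ hi, Finset.orderEmbOfFin_apply]
  simp [Fin.getElem_fin]

lemma enum_strictMono {n ℓ : ℕ} {P : Finset (Fin n × Fin n)}
    (h : (freeSet P).card = n - 2 * ℓ) : StrictMono (enum ℓ P) := by
  rw [enum_eq_orderEmbOfFin h]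
  exact ((freeSet P).orderEmbOfFin h).strictMono

lemma enum_mem {n ℓ : ℕ} {P : Finset (Fin n × Fin n)}
    (h : (freeSet P).card = n - 2 * ℓ) (i : Fin (n - 2 * ℓ)) : enum ℓ P i ∈ freeSet P := by
  rw [enum_eq_orderEmbOfFin h]
  exact Finset.orderEmbOfFin_mem _ h i

lemma enum_surj {n ℓ : ℕ} {P : Finset (Fin n × Fin n)}
    (h : (freeSet P).card = n - 2 * ℓ) {x : Fin n} (hx : x ∈ freeSet P) :
    ∃ i, enum ℓ P i = x := by
  rw [enum_eq_orderEmbOfFin h]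
  have := Finset.range_orderEmbOfFin (freeSet P) h
  have hx' : (x : Fin n) ∈ Set.range ((freeSet P).orderEmbOfFin h) := by
    rw [this]; exact_mod_cast hx
  obtain ⟨i, hi⟩ := hx'
  exact ⟨i, hi⟩

/-! ### Transporting pairings along injections -/

def sortp {n : ℕ} (pr : Fin n × Fin n) : Fin n × Fin n :=
  if pr.1 < pr.2 then pr else (pr.2, pr.1)

def psign {n : ℕ} (pr : Fin n × Fin n) : ℂ := if pr.1 < pr.2 then 1 else -1

def Comp {n : ℕ} (pr : Fin n × Fin n) (x : Fin n) : Prop := x = pr.1 ∨ x = pr.2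

lemma comp_sortp {n : ℕ} {pr : Fin n × Fin n} {x : Fin n} :
    Comp (sortp pr) x ↔ Comp pr x := by
  unfold sortp Comp; split_ifs <;> simp <;> tauto

lemma psign_mul_self {n : ℕ} (pr : Fin n × Fin n) : psign pr * psign pr = 1 := by
  unfold psign; split_ifs <;> ring

lemma eps_sortp {n : ℕ} (u : Fin n → Fin 2) (pr : Fin n × Fin n) :
    eps (u pr.1) (u pr.2) = psign pr * eps (u (sortp pr).1) (u (sortp pr).2) := by
  unfold sortp psign
  split_ifs with hlt
  · ring
  · simp only [eps_swap (u pr.2) (u pr.1)]; ring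

lemma sortp_lt {n : ℕ} {pr : Fin n × Fin n} (h : pr.1 ≠ pr.2) :
    (sortp pr).1 < (sortp pr).2 := by
  unfold sortp; split_ifs with hlt
  · exact hlt
  · exact lt_of_le_of_ne (not_lt.1 hlt) (Ne.symm h)

section MapPair

variable {a n : ℕ} (g : Fin a → Fin n) (j₀ k₀ : Fin n)

def pmap (pr : Fin a × Fin a) : Fin n × Fin n := sortp (g pr.1, g pr.2)

def mapP (q : Finset (Fin a × Fin a)) : Finset (Fin n × Fin n) :=
  insert (sortp (j₀, k₀)) (q.image (pmap g))

def mapSign (q : Finset (Fin a × Fin a)) : ℂ :=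
  psign (j₀, k₀) * ∏ pr ∈ q, psign (g pr.1, g pr.2)

variable {g} {j₀} {k₀}
lemma comp_pmap {pr : Fin a × Fin a} {x : Fin n} :
    Comp (pmap g pr) x ↔ x = g pr.1 ∨ x = g pr.2 := comp_sortp

lemma comp_disj_of_ne {pr1 pr2 : Fin n × Fin n}
    (h : ∀ x, Comp pr1 x → Comp pr2 x → False) :
    pr1.1 ≠ pr2.1 ∧ pr1.1 ≠ pr2.2 ∧ pr1.2 ≠ pr2.1 ∧ pr1.2 ≠ pr2.2 := by
  refine ⟨?_, ?_, ?_, ?_⟩ <;> intro hx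
  · exact h pr1.1 (Or.inl rfl) (Or.inl hx)
  · exact h pr1.1 (Or.inl rfl) (Or.inr hx)
  · exact h pr1.2 (Or.inr rfl) (Or.inl hx)
  · exact h pr1.2 (Or.inr rfl) (Or.inr hx)

variable (hg : Function.Injective g) (hj : ∀ t, g t ≠ j₀) (hk : ∀ t, g t ≠ k₀)
  (hjk : j₀ ≠ k₀) {ℓ : ℕ} {q : Finset (Fin a × Fin a)} (hq : q ∈ Pairings a ℓ)

include hj in
lemma sortjk_notmem_image : sortp (j₀, k₀) ∉ q.image (pmap g) := by
  intro hmem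
  obtain ⟨pr, hpr, heq⟩ := Finset.mem_image.1 hmem
  have h1 : Comp (sortp (j₀, k₀)) j₀ := comp_sortp.2 (Or.inl rfl)
  rw [← heq] at h1
  rcases comp_sortp.1 h1 with h4 | h4
  · exact hj pr.1 h4.symm
  · exact hj pr.2 h4.symm

include hg hq in
lemma pmap_injOn : Set.InjOn (pmap g) q := by
  obtain ⟨hcard, hord, hdisj⟩ := mem_Pairings.1 hq
  intro p1 hp1 p2 hp2 heq
  by_contra hne
  have h4 := hdisj p1 hp1 p2 hp2 hne
  have c1 : Comp (pmap g p1) (g p1.1) := (comp_sortp (pr := (g p1.1, g p1.2))).2 (Or.inl rfl)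
  rw [heq] at c1
  have := (comp_sortp (pr := (g p2.1, g p2.2))).1 c1
  rcases this with h5 | h5 <;> [exact h4.1 (hg h5); exact h4.2.1 (hg h5)]

include hg hj hq in
lemma mapP_card : (mapP g j₀ k₀ q).card = ℓ + 1 := by
  obtain ⟨hcard, hord, hdisj⟩ := mem_Pairings.1 hq
  rw [mapP, Finset.card_insert_of_notMem (sortjk_notmem_image hj),
    Finset.card_image_of_injOn (pmap_injOn hg hq), hcard]

include hg hj hk hjk hq in
lemma mapP_mem_Pairings : mapP g j₀ k₀ q ∈ Pairings n (ℓ + 1) := by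
  obtain ⟨hcard, hord, hdisj⟩ := mem_Pairings.1 hq
  refine mem_Pairings.2 ⟨mapP_card hg hj hq, ?_, ?_⟩
  · intro p hp
    rcases Finset.mem_insert.1 hp with rfl | hp
    · exact sortp_lt hjk
    · obtain ⟨pr, hpr, rfl⟩ := Finset.mem_image.1 hp
      exact sortp_lt (fun h => absurd (hg h) (ne_of_lt (hord pr hpr)))
  · intro p hp r hr hne
    apply comp_disj_of_ne
    intro x hx1 hx2
    rcases Finset.mem_insert.1 hp with rfl | hp <;> rcases Finset.mem_insert.1 hr with h' | hr
    · exact hne h'.symm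
    · -- p = sortp (j₀,k₀), r ∈ image
      obtain ⟨pr, hpr, rfl⟩ := Finset.mem_image.1 hr
      have c1 := (comp_sortp (pr := (j₀, k₀))).1 hx1
      have c2 := comp_pmap.1 hx2
      rcases c1 with rfl | rfl <;> rcases c2 with h5 | h5 <;>
        [exact hj pr.1 h5.symm; exact hj pr.2 h5.symm; exact hk pr.1 h5.symm;
          exact hk pr.2 h5.symm]
    · subst h'
      obtain ⟨pr, hpr, rfl⟩ := Finset.mem_image.1 hp
      have c1 := (comp_sortp (pr := (j₀, k₀))).1 hx2
      have c2 := comp_pmap.1 hx1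
      rcases c1 with rfl | rfl <;> rcases c2 with h5 | h5 <;>
        [exact hj pr.1 h5.symm; exact hj pr.2 h5.symm; exact hk pr.1 h5.symm;
          exact hk pr.2 h5.symm]
    · obtain ⟨p1, hp1, rfl⟩ := Finset.mem_image.1 hp
      obtain ⟨p2, hp2, rfl⟩ := Finset.mem_image.1 hr
      have hne12 : p1 ≠ p2 := fun h => hne (by rw [h])
      have h4 := hdisj p1 hp1 p2 hp2 hne12
      have c1 := comp_pmap.1 hx1
      have c2 := comp_pmap.1 hx2
      rcases c1 with rfl | rfl <;> rcases c2 with h5 | h5 <;>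
        [exact h4.1 (hg h5); exact h4.2.1 (hg h5); exact h4.2.2.1 (hg h5);
          exact h4.2.2.2 (hg h5)]

omit hg hj hk hjk hq in
lemma mapSign_mul_self : mapSign g j₀ k₀ q * mapSign g j₀ k₀ q = 1 := by
  rw [mapSign, mul_mul_mul_comm, psign_mul_self, ← Finset.prod_mul_distrib, one_mul]
  rw [Finset.prod_congr rfl (fun pr _ => psign_mul_self _), Finset.prod_const_one]

include hg hj hq in
lemma eps_prod_mapP (u : Fin n → Fin 2) :
    eps (u j₀) (u k₀) * ∏ pr ∈ q, eps (u (g pr.1)) (u (g pr.2))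
      = mapSign g j₀ k₀ q * ∏ pr ∈ mapP g j₀ k₀ q, eps (u pr.1) (u pr.2) := by
  rw [mapP, Finset.prod_insert (sortjk_notmem_image hj),
    Finset.prod_image (pmap_injOn hg hq), mapSign]
  have h1 : eps (u j₀) (u k₀) = psign (j₀, k₀) * eps (u (sortp (j₀,k₀)).1) (u (sortp (j₀,k₀)).2) :=
    eps_sortp u (j₀, k₀)
  have h2 : ∀ pr ∈ q, eps (u (g pr.1)) (u (g pr.2))
      = psign (g pr.1, g pr.2) * eps (u (pmap g pr).1) (u (pmap g pr).2) :=
    fun pr _ => eps_sortp u (g pr.1, g pr.2)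
  rw [h1, Finset.prod_congr rfl h2, Finset.prod_mul_distrib]
  ring

include hg hj hq in
lemma support_mapP :
    support (mapP g j₀ k₀ q) = insert j₀ (insert k₀ ((support q).image g)) := by
  ext x
  simp only [mem_support_iff, Finset.mem_insert, Finset.mem_image]
  constructor
  · rintro ⟨pr, hpr, hx⟩
    have hc : Comp pr x := hx
    rcases Finset.mem_insert.1 hpr with rfl | hpr
    · rcases (comp_sortp (pr := (j₀, k₀))).1 hc with rfl | rfl
      · exact Or.inl rfl
      · exact Or.inr (Or.inl rfl)
    · obtain ⟨p1, hp1, rfl⟩ := Finset.mem_image.1 hpr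
      rcases comp_pmap.1 hc with rfl | rfl
      · exact Or.inr (Or.inr ⟨p1.1, ⟨p1, hp1, Or.inl rfl⟩, rfl⟩)
      · exact Or.inr (Or.inr ⟨p1.2, ⟨p1, hp1, Or.inr rfl⟩, rfl⟩)
  · rintro (h | h | ⟨y, hy, h⟩)
    · rw [h]
      exact ⟨sortp (j₀, k₀), Finset.mem_insert_self _ _,
        (comp_sortp (pr := (j₀, k₀))).2 (Or.inl rfl)⟩
    · rw [h]
      exact ⟨sortp (j₀, k₀), Finset.mem_insert_self _ _,
        (comp_sortp (pr := (j₀, k₀))).2 (Or.inr rfl)⟩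
    · rw [← h]
      obtain ⟨p1, hp1, hy'⟩ := hy
      refine ⟨pmap g p1, Finset.mem_insert_of_mem (Finset.mem_image_of_mem _ hp1), ?_⟩
      rcases hy' with rfl | rfl
      · exact comp_pmap.2 (Or.inl rfl)
      · exact comp_pmap.2 (Or.inr rfl)

variable (hcov : ∀ x : Fin n, x = j₀ ∨ x = k₀ ∨ ∃ t, g t = x)
include hg hj hk hq hcov

lemma freeSet_mapP : freeSet (mapP g j₀ k₀ q) = (freeSet q).image g := by
  have hs := support_mapP (k₀ := k₀) hg hj hq
  ext x
  rw [freeSet, Finset.mem_compl, hs]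
  simp only [Finset.mem_insert, Finset.mem_image, not_or]
  constructor
  · rintro ⟨hxj, hxk, hximg⟩
    rcases hcov x with rfl | rfl | ⟨t, rfl⟩
    · exact absurd rfl hxj
    · exact absurd rfl hxk
    · refine ⟨t, ?_, rfl⟩
      rw [freeSet, Finset.mem_compl]
      intro hts
      exact hximg ⟨t, hts, rfl⟩
  · rintro ⟨t, ht, rfl⟩
    rw [freeSet, Finset.mem_compl] at ht
    refine ⟨hj t, hk t, ?_⟩
    rintro ⟨y, hy, hxy⟩
    exact ht (hg hxy ▸ hy)

end MapPair

/-! ### Transporting enum -/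

section EnumMap

variable {a n : ℕ} {g : Fin a → Fin n} {j₀ k₀ : Fin n}
  {ℓ : ℕ} {q : Finset (Fin a × Fin a)}

lemma cast_strictMono {m m' : ℕ} (h : m = m') : StrictMono (Fin.cast h) := by
  intro x y hxy
  exact hxy

variable (hg : Function.Injective g) (hj : ∀ t, g t ≠ j₀) (hk : ∀ t, g t ≠ k₀)
  (hjk : j₀ ≠ k₀) (hq : q ∈ Pairings a ℓ)
  (hcov : ∀ x : Fin n, x = j₀ ∨ x = k₀ ∨ ∃ t, g t = x)
  (hm : a - 2 * ℓ = n - 2 * (ℓ + 1))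

include hg hj hk hjk hq hcov hm

lemma enum_mapP_exists :
    ∃ π : Equiv.Perm (Fin (n - 2 * (ℓ + 1))), ∀ i : Fin (a - 2 * ℓ),
      g (enum ℓ q i) = enum (ℓ + 1) (mapP g j₀ k₀ q) (π (Fin.cast hm i)) := by
  have hScard : (freeSet (mapP g j₀ k₀ q)).card = n - 2 * (ℓ + 1) :=
    card_freeSet (mapP_mem_Pairings hg hj hk hjk hq)
  have hqfree : (freeSet q).card = a - 2 * ℓ := card_freeSet hq
  have hmem : ∀ i' : Fin (n - 2 * (ℓ + 1)),
      g (enum ℓ q (Fin.cast hm.symm i')) ∈ freeSet (mapP g j₀ k₀ q) := by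
    intro i'
    rw [freeSet_mapP hg hj hk hq hcov]
    exact Finset.mem_image_of_mem g (enum_mem hqfree _)
  set S := freeSet (mapP g j₀ k₀ q) with hS
  set τ : Fin (n - 2 * (ℓ + 1)) → Fin (n - 2 * (ℓ + 1)) :=
    fun i' => (S.orderIsoOfFin hScard).symm ⟨g (enum ℓ q (Fin.cast hm.symm i')), hmem i'⟩ with hτ
  have hτinj : Function.Injective τ := by
    intro x y hxy
    rw [hτ] at hxy
    simp only [] at hxy
    have h2 := congrArg (fun z => ((S.orderIsoOfFin hScard) z : Fin n)) hxy
    simp only [OrderIso.apply_symm_apply] at h2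
    have h3 := hg h2
    have h4 := (enum_strictMono hqfree).injective h3
    have h5 := (cast_strictMono hm.symm).injective h4
    exact h5
  refine ⟨Equiv.ofBijective τ ((Finite.injective_iff_bijective).1 hτinj), ?_⟩
  intro i
  have henum : enum (ℓ + 1) (mapP g j₀ k₀ q) = fun i' => S.orderEmbOfFin hScard i' :=
    enum_eq_orderEmbOfFin hScard
  rw [henum]
  simp only [Equiv.ofBijective_apply, hτ]
  rw [← Finset.coe_orderIsoOfFin_apply, OrderIso.apply_symm_apply]
  rfl

lemma enum_mapP_mono (hmono : StrictMono g) :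
    ∀ i : Fin (a - 2 * ℓ),
      g (enum ℓ q i) = enum (ℓ + 1) (mapP g j₀ k₀ q) (Fin.cast hm i) := by
  have hScard : (freeSet (mapP g j₀ k₀ q)).card = n - 2 * (ℓ + 1) :=
    card_freeSet (mapP_mem_Pairings hg hj hk hjk hq)
  have hqfree : (freeSet q).card = a - 2 * ℓ := card_freeSet hq
  have hmem : ∀ i' : Fin (n - 2 * (ℓ + 1)),
      g (enum ℓ q (Fin.cast hm.symm i')) ∈ freeSet (mapP g j₀ k₀ q) := by
    intro i'
    rw [freeSet_mapP hg hj hk hq hcov]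
    exact Finset.mem_image_of_mem g (enum_mem hqfree _)
  have hsm : StrictMono (fun i' : Fin (n - 2 * (ℓ + 1)) =>
      g (enum ℓ q (Fin.cast hm.symm i'))) :=
    hmono.comp ((enum_strictMono hqfree).comp (cast_strictMono hm.symm))
  have huniq := Finset.orderEmbOfFin_unique hScard (f := fun i' =>
      g (enum ℓ q (Fin.cast hm.symm i'))) hmem hsm
  intro i
  have h2 := congrFun huniq (Fin.cast hm i)
  have h3 : Fin.cast hm.symm (Fin.cast hm i) = i := Fin.ext rfl
  rw [h3] at h2
  rw [h2, enum_eq_orderEmbOfFin hScard]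

end EnumMap

/-! ### The singleton pairing, iota, extendS -/

section Iota

variable {n : ℕ} {j k : Fin n}

lemma pair_mem_Pairings (hjk : j < k) :
    ({(j, k)} : Finset (Fin n × Fin n)) ∈ Pairings n 1 := by
  refine mem_Pairings.2 ⟨Finset.card_singleton _, ?_, ?_⟩
  · intro p hp; rw [Finset.mem_singleton] at hp; subst hp; exact hjk
  · intro p hp r hr hne
    rw [Finset.mem_singleton] at hp hr; subst hp; subst hr; exact absurd rfl hne

lemma mem_freeSet_pair {i : Fin n} :
    i ∈ freeSet ({(j, k)} : Finset (Fin n × Fin n)) ↔ i ≠ j ∧ i ≠ k := by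
  rw [mem_freeSet_iff]
  constructor
  · intro h; exact h (j, k) (Finset.mem_singleton_self _)
  · intro h pr hpr; rw [Finset.mem_singleton] at hpr; subst hpr; exact h

lemma card_freeSet_pair (hjk : j < k) :
    (freeSet ({(j, k)} : Finset (Fin n × Fin n))).card = n - 2 * 1 :=
  card_freeSet (pair_mem_Pairings hjk)

def iota (j k : Fin n) : Fin (n - 2) → Fin n := fun t => enum 1 {(j, k)} t

lemma iota_strictMono (hjk : j < k) : StrictMono (iota j k) :=
  enum_strictMono (card_freeSet_pair hjk)

lemma iota_injective (hjk : j < k) : Function.Injective (iota j k) :=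
  (iota_strictMono hjk).injective

lemma iota_mem (hjk : j < k) (t : Fin (n - 2)) :
    iota j k t ≠ j ∧ iota j k t ≠ k :=
  mem_freeSet_pair.1 (enum_mem (card_freeSet_pair hjk) t)

lemma iota_surj (hjk : j < k) {i : Fin n} (h1 : i ≠ j) (h2 : i ≠ k) :
    ∃ t, iota j k t = i :=
  enum_surj (card_freeSet_pair hjk) (mem_freeSet_pair.2 ⟨h1, h2⟩)

def extendS (j k : Fin n) (a b : Fin 2) (g : Fin (n - 2) → Fin 2) : Fin n → Fin 2 :=
  fun i => if i = j then a else if i = k then b else Function.extend (iota j k) g (fun _ => 0) i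

lemma extendS_j (a b : Fin 2) (g : Fin (n - 2) → Fin 2) : extendS j k a b g j = a := by
  unfold extendS; simp

lemma extendS_k (hjk : j ≠ k) (a b : Fin 2) (g : Fin (n - 2) → Fin 2) :
    extendS j k a b g k = b := by
  unfold extendS; simp [Ne.symm hjk]

lemma extendS_iota (hjk : j < k) (a b : Fin 2) (g : Fin (n - 2) → Fin 2) (t : Fin (n - 2)) :
    extendS j k a b g (iota j k t) = g t := by
  unfold extendS
  rw [if_neg (iota_mem hjk t).1, if_neg (iota_mem hjk t).2,
    Function.Injective.extend_apply (iota_injective hjk)]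

lemma extendS_reconstruct (hjk : j < k) (E : Fin n → Fin 2) :
    extendS j k (E j) (E k) (fun t => E (iota j k t)) = E := by
  funext i
  unfold extendS
  split_ifs with h1 h2
  · rw [h1]
  · rw [h2]
  · obtain ⟨t, rfl⟩ := iota_surj hjk h1 h2
    rw [Function.Injective.extend_apply (iota_injective hjk)]

lemma extendS_comp_iota (hjk : j < k) (a b : Fin 2) (f : Fin n → Fin 2) :
    extendS j k a b (fun t => f (iota j k t)) = patch f j k a b := by
  funext i
  unfold extendS patch
  split_ifs with h1 h2
  · rfl
  · rfl
  · obtain ⟨t, rfl⟩ := iota_surj hjk h1 h2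
    rw [Function.Injective.extend_apply (iota_injective hjk)]

def packEquiv (hjk : j < k) (ρ : Equiv.Perm (Fin n)) :
    (Fin 2 × Fin 2 × (Fin (n - 2) → Fin 2)) ≃ (Fin n → Fin 2) where
  toFun x := extendS j k x.1 x.2.1 x.2.2 ∘ ρ
  invFun u := (u (ρ.symm j), u (ρ.symm k), fun t => u (ρ.symm (iota j k t)))
  left_inv := by
    rintro ⟨a, b, v⟩
    have e1 : ∀ (i : Fin n), (extendS j k a b v ∘ ρ) (ρ.symm i) = extendS j k a b v i := by
      intro i; simp [Function.comp]
    refine Prod.ext ?_ (Prod.ext ?_ ?_)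
    · simp only [e1]; exact extendS_j a b v
    · simp only [e1]; exact extendS_k (ne_of_lt hjk) a b v
    · funext t; simp only [e1]; exact extendS_iota hjk a b v t
  right_inv := by
    intro u
    funext i
    have := congrFun (extendS_reconstruct hjk (u ∘ ρ.symm)) (ρ i)
    simp only [Function.comp] at this ⊢
    rw [this, Equiv.symm_apply_apply]

def lam (j k : Fin n) (ρ : Equiv.Perm (Fin n)) (φ : Spinor n) : Spinor (n - 2) :=
  fun v => ∑ a : Fin 2, ∑ b : Fin 2, eps a b * φ (extendS j k a b v ∘ ρ)

def Dop (j k : Fin n) (ρ : Equiv.Perm (Fin n)) : Op n := fun φ f =>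
  eps (f j) (f k) * ∑ a : Fin 2, ∑ b : Fin 2, eps a b * φ (patch f j k a b ∘ ρ)

lemma Dop_eq_lam (hjk : j < k) (ρ : Equiv.Perm (Fin n)) (φ : Spinor n) (f : Fin n → Fin 2) :
    Dop j k ρ φ f = eps (f j) (f k) * lam j k ρ φ (fun t => f (iota j k t)) := by
  unfold Dop lam
  congr 1
  refine Finset.sum_congr rfl fun a _ => Finset.sum_congr rfl fun b _ => ?_
  rw [extendS_comp_iota hjk]

lemma Dop_diag (j : Fin n) (ρ : Equiv.Perm (Fin n)) : Dop j j ρ = 0 := by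
  funext φ f
  show eps (f j) (f j) * _ = 0
  rw [eps_diag, zero_mul]

lemma Dop_comm {j k : Fin n} (h : j ≠ k) (ρ : Equiv.Perm (Fin n)) :
    Dop j k ρ = Dop k j ρ := by
  funext φ f
  unfold Dop
  have hpatch : ∀ a b, patch f j k a b = patch f k j b a := by
    intro a b; funext i; unfold patch
    by_cases h1 : i = j
    · subst h1; rw [if_pos rfl, if_neg h, if_pos rfl]
    · by_cases h2 : i = k
      · subst h2; rw [if_neg h1, if_pos rfl, if_pos rfl]
      · rw [if_neg h1, if_neg h2, if_neg h2, if_neg h1]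
  have hs : ∑ a : Fin 2, ∑ b : Fin 2, eps a b * φ (patch f j k a b ∘ ρ)
      = - ∑ a : Fin 2, ∑ b : Fin 2, eps a b * φ (patch f k j a b ∘ ρ) := by
    rw [Finset.sum_comm]
    rw [← Finset.sum_neg_distrib]
    refine Finset.sum_congr rfl fun b _ => ?_
    rw [← Finset.sum_neg_distrib]
    refine Finset.sum_congr rfl fun a _ => ?_
    rw [hpatch, eps_swap]
    ring
  rw [hs, eps_swap (f k) (f j)]
  ring

/-! ### Telescoping: Id − Sym lies in the span of the Dop -/

lemma telescope (σ : Equiv.Perm (Fin n)) :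
    (fun (φ : Spinor n) (f : Fin n → Fin 2) => φ f - φ (f ∘ σ)) ∈
      Submodule.span ℂ (Set.range fun x : Fin n × Fin n × Equiv.Perm (Fin n) =>
        Dop x.1 x.2.1 x.2.2) := by
  refine Equiv.Perm.swap_induction_on σ ?_ ?_
  · have : (fun (φ : Spinor n) (f : Fin n → Fin 2) => φ f - φ (f ∘ (1 : Equiv.Perm (Fin n))))
        = 0 := by
      funext φ f
      simp
    rw [this]
    exact Submodule.zero_mem _
  · intro σ x y hxy ih
    have hstep : (fun (φ : Spinor n) (f : Fin n → Fin 2) =>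
          φ f - φ (f ∘ ⇑(Equiv.swap x y * σ)))
        = (fun (φ : Spinor n) (f : Fin n → Fin 2) => φ f - φ (f ∘ σ)) + Dop x y σ := by
      funext φ f
      have hcomp : f ∘ ⇑(Equiv.swap x y * σ) = (f ∘ ⇑(Equiv.swap x y)) ∘ ⇑σ := by
        funext i; simp [Function.comp, Equiv.Perm.mul_apply]
      have hswap := swap_identity (fun g => φ (g ∘ ⇑σ)) f hxy
      show φ f - φ (f ∘ ⇑(Equiv.swap x y * σ))
          = (φ f - φ (f ∘ ⇑σ)) + Dop x y σ φ f
      rw [hcomp]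
      have hD : Dop x y σ φ f
          = eps (f x) (f y) * ∑ a : Fin 2, ∑ b : Fin 2, eps a b * φ (patch f x y a b ∘ ⇑σ) := rfl
      rw [hD, ← hswap]
      ring
    rw [hstep]
    exact Submodule.add_mem _ ih (Submodule.subset_span ⟨(x, y, σ), rfl⟩)

lemma id_sub_sym_mem :
    (fun (φ : Spinor n) (f : Fin n → Fin 2) => φ f - symmetrize n φ f) ∈
      Submodule.span ℂ (Set.range fun x : Fin n × Fin n × Equiv.Perm (Fin n) =>
        Dop x.1 x.2.1 x.2.2) := by
  have hfact : ((n.factorial : ℂ)) ≠ 0 := Nat.cast_ne_zero.2 (Nat.factorial_ne_zero n)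
  have heq : (fun (φ : Spinor n) (f : Fin n → Fin 2) => φ f - symmetrize n φ f)
      = (1 / (n.factorial : ℂ)) •
        (∑ σ : Equiv.Perm (Fin n),
          (fun (φ : Spinor n) (f : Fin n → Fin 2) => φ f - φ (f ∘ σ)) : Op n) := by
    funext φ f
    have h1 : ((1 / (n.factorial : ℂ)) •
        (∑ σ : Equiv.Perm (Fin n),
          (fun (φ : Spinor n) (f : Fin n → Fin 2) => φ f - φ (f ∘ σ)) : Op n)) φ f
        = (1 / (n.factorial : ℂ)) * ∑ σ : Equiv.Perm (Fin n), (φ f - φ (f ∘ σ)) := by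
      simp only [Pi.smul_apply, Finset.sum_apply, smul_eq_mul]
    rw [h1, Finset.sum_sub_distrib, Finset.sum_const, symmetrize]
    simp only [Finset.card_univ, Fintype.card_perm, Fintype.card_fin, smul_eq_mul]
    field_simp
    ring
  rw [heq]
  exact Submodule.smul_mem _ _ (Submodule.sum_mem _ fun σ _ => telescope σ)

end Iota

/-! ### The key lemma: irreducible components of `lam` are irreducible components of `φ` -/

lemma key_contract {n : ℕ} {j k : Fin n} (hjk : j < k) (ρ : Equiv.Perm (Fin n)) {ℓ' : ℕ}
    {q' : Finset (Fin (n - 2) × Fin (n - 2))} (hq' : q' ∈ Pairings (n - 2) ℓ')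
    (hm : (n - 2) - 2 * ℓ' = n - 2 * (ℓ' + 1)) :
    ∃ (s : ℂ) (Q : Finset (Fin n × Fin n)), Q ∈ Pairings n (ℓ' + 1) ∧
      ∀ (φ : Spinor n) (h : Fin (n - 2 * (ℓ' + 1)) → Fin 2),
        irredComp (n - 2) ℓ' q' (lam j k ρ φ) (fun i => h (Fin.cast hm i))
          = s * irredComp n (ℓ' + 1) Q φ h := by
  set g₀ : Fin (n - 2) → Fin n := fun t => ρ.symm (iota j k t) with hg₀
  set j₀ : Fin n := ρ.symm j with hj₀
  set k₀ : Fin n := ρ.symm k with hk₀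
  have hg : Function.Injective g₀ := fun x y hxy =>
    iota_injective hjk (ρ.symm.injective hxy)
  have hj : ∀ t, g₀ t ≠ j₀ := fun t ht => (iota_mem hjk t).1 (ρ.symm.injective ht)
  have hk : ∀ t, g₀ t ≠ k₀ := fun t ht => (iota_mem hjk t).2 (ρ.symm.injective ht)
  have hjk₀ : j₀ ≠ k₀ := fun hh => (ne_of_lt hjk) (ρ.symm.injective hh)
  have hcov : ∀ x : Fin n, x = j₀ ∨ x = k₀ ∨ ∃ t, g₀ t = x := by
    intro x
    by_cases h1 : ρ x = j
    · left; rw [hj₀, ← h1, Equiv.symm_apply_apply]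
    by_cases h2 : ρ x = k
    · right; left; rw [hk₀, ← h2, Equiv.symm_apply_apply]
    · right; right
      obtain ⟨t, ht⟩ := iota_surj hjk h1 h2
      refine ⟨t, ?_⟩
      rw [hg₀]
      simp only []
      rw [ht, Equiv.symm_apply_apply]
  obtain ⟨π, hπ⟩ := enum_mapP_exists hg hj hk hjk₀ hq' hcov hm
  set Q : Finset (Fin n × Fin n) := mapP g₀ j₀ k₀ q' with hQ
  set s : ℂ := mapSign g₀ j₀ k₀ q' with hs
  refine ⟨s, Q, mapP_mem_Pairings hg hj hk hjk₀ hq', ?_⟩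
  intro φ h
  set E : Fin ((n - 2) - 2 * ℓ') ≃ Fin (n - 2 * (ℓ' + 1)) := (finCongr hm).trans π with hE
  -- Step A : the contraction identity.
  have hcontract : ∀ w : Fin ((n - 2) - 2 * ℓ') → Fin 2,
      contract (n - 2) ℓ' q' (lam j k ρ φ) w
        = s * contract n (ℓ' + 1) Q φ (fun i' => w (E.symm i')) := by
    intro w
    have hpoint : ∀ a b : Fin 2, ∀ v : Fin (n - 2) → Fin 2,
        (∏ pr ∈ q', eps (v pr.1) (v pr.2)) *
            (∏ i : Fin ((n - 2) - 2 * ℓ'), if v (enum ℓ' q' i) = w i then 1 else 0) *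
            (eps a b * φ (packEquiv hjk ρ (a, b, v)))
          = s * ((∏ pr ∈ Q, eps ((packEquiv hjk ρ (a, b, v)) pr.1)
                ((packEquiv hjk ρ (a, b, v)) pr.2)) *
              (∏ i' : Fin (n - 2 * (ℓ' + 1)),
                if (packEquiv hjk ρ (a, b, v)) (enum (ℓ' + 1) Q i') = w (E.symm i')
                then 1 else 0) *
              φ (packEquiv hjk ρ (a, b, v))) := by
      intro a b v
      set u : Fin n → Fin 2 := packEquiv hjk ρ (a, b, v) with hu
      have hu_j : u j₀ = a := by
        rw [hu, hj₀]
        show extendS j k a b v (ρ (ρ.symm j)) = a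
        rw [Equiv.apply_symm_apply]; exact extendS_j a b v
      have hu_k : u k₀ = b := by
        rw [hu, hk₀]
        show extendS j k a b v (ρ (ρ.symm k)) = b
        rw [Equiv.apply_symm_apply]; exact extendS_k (ne_of_lt hjk) a b v
      have hu_g : ∀ t, u (g₀ t) = v t := by
        intro t
        rw [hu, hg₀]
        show extendS j k a b v (ρ (ρ.symm (iota j k t))) = v t
        rw [Equiv.apply_symm_apply]; exact extendS_iota hjk a b v t
      have hprod : eps (u j₀) (u k₀) * ∏ pr ∈ q', eps (u (g₀ pr.1)) (u (g₀ pr.2))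
          = s * ∏ pr ∈ Q, eps (u pr.1) (u pr.2) := eps_prod_mapP hg hj hq' u
      have hq'prod : ∏ pr ∈ q', eps (v pr.1) (v pr.2)
          = ∏ pr ∈ q', eps (u (g₀ pr.1)) (u (g₀ pr.2)) :=
        Finset.prod_congr rfl fun pr _ => by rw [hu_g, hu_g]
      have hite : (∏ i : Fin ((n - 2) - 2 * ℓ'),
            if v (enum ℓ' q' i) = w i then (1 : ℂ) else 0)
          = (∏ i' : Fin (n - 2 * (ℓ' + 1)),
              if u (enum (ℓ' + 1) Q i') = w (E.symm i') then (1 : ℂ) else 0) := by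
        rw [← Equiv.prod_comp E
          (fun i' => if u (enum (ℓ' + 1) Q i') = w (E.symm i') then (1 : ℂ) else 0)]
        refine Finset.prod_congr rfl fun i _ => ?_
        rw [Equiv.symm_apply_apply]
        have hEi : u (enum (ℓ' + 1) Q (E i)) = v (enum ℓ' q' i) := by
          rw [hE]
          show u (enum (ℓ' + 1) Q (π (finCongr hm i))) = _
          rw [show (finCongr hm i : Fin (n - 2 * (ℓ' + 1))) = Fin.cast hm i from rfl]
          rw [← hπ i, hu_g]
        rw [hEi]
      have hss : s * s = 1 := mapSign_mul_self
      calc (∏ pr ∈ q', eps (v pr.1) (v pr.2)) *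
            (∏ i : Fin ((n - 2) - 2 * ℓ'), if v (enum ℓ' q' i) = w i then 1 else 0) *
            (eps a b * φ u)
          = (eps (u j₀) (u k₀) * ∏ pr ∈ q', eps (u (g₀ pr.1)) (u (g₀ pr.2))) *
            ((∏ i' : Fin (n - 2 * (ℓ' + 1)),
              if u (enum (ℓ' + 1) Q i') = w (E.symm i') then 1 else 0) * φ u) := by
            rw [hq'prod, hite, hu_j, hu_k]; ring
        _ = (s * s) * ((s * ∏ pr ∈ Q, eps (u pr.1) (u pr.2)) *
            ((∏ i' : Fin (n - 2 * (ℓ' + 1)),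
              if u (enum (ℓ' + 1) Q i') = w (E.symm i') then 1 else 0) * φ u)) := by
            rw [hss, ← hprod]; ring
        _ = s * ((∏ pr ∈ Q, eps (u pr.1) (u pr.2)) *
            (∏ i' : Fin (n - 2 * (ℓ' + 1)),
              if u (enum (ℓ' + 1) Q i') = w (E.symm i') then 1 else 0) * φ u) := by
            rw [hss]; ring
    set G : (Fin n → Fin 2) → ℂ := fun u =>
      s * ((∏ pr ∈ Q, eps (u pr.1) (u pr.2)) *
        (∏ i' : Fin (n - 2 * (ℓ' + 1)),
          if u (enum (ℓ' + 1) Q i') = w (E.symm i') then 1 else 0) * φ u) with hG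
    have lhs_eq : contract (n - 2) ℓ' q' (lam j k ρ φ) w
        = ∑ a : Fin 2, ∑ b : Fin 2, ∑ v : Fin (n - 2) → Fin 2,
            (∏ pr ∈ q', eps (v pr.1) (v pr.2)) *
            (∏ i : Fin ((n - 2) - 2 * ℓ'), if v (enum ℓ' q' i) = w i then 1 else 0) *
            (eps a b * φ (packEquiv hjk ρ (a, b, v))) := by
      rw [contract]
      have h1 : ∀ v : Fin (n - 2) → Fin 2,
          (∏ pr ∈ q', eps (v pr.1) (v pr.2)) *
            (∏ i : Fin ((n - 2) - 2 * ℓ'), if v (enum ℓ' q' i) = w i then 1 else 0) *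
            lam j k ρ φ v
          = ∑ a : Fin 2, ∑ b : Fin 2,
              (∏ pr ∈ q', eps (v pr.1) (v pr.2)) *
              (∏ i : Fin ((n - 2) - 2 * ℓ'), if v (enum ℓ' q' i) = w i then 1 else 0) *
              (eps a b * φ (packEquiv hjk ρ (a, b, v))) := by
        intro v
        rw [lam, Finset.mul_sum]
        refine Finset.sum_congr rfl fun a _ => ?_
        rw [Finset.mul_sum]
        exact Finset.sum_congr rfl fun b _ => rfl
      rw [Finset.sum_congr rfl fun v _ => h1 v]
      rw [Finset.sum_comm]
      refine Finset.sum_congr rfl fun a _ => ?_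
      rw [Finset.sum_comm]
    have rhs_eq : ∑ u : Fin n → Fin 2, G u
        = ∑ a : Fin 2, ∑ b : Fin 2, ∑ v : Fin (n - 2) → Fin 2, G (packEquiv hjk ρ (a, b, v)) := by
      rw [← Equiv.sum_comp (packEquiv hjk ρ) G, Fintype.sum_prod_type]
      refine Finset.sum_congr rfl fun a _ => ?_
      rw [Fintype.sum_prod_type]
    have : contract (n - 2) ℓ' q' (lam j k ρ φ) w = ∑ u : Fin n → Fin 2, G u := by
      rw [lhs_eq, rhs_eq]
      refine Finset.sum_congr rfl fun a _ => Finset.sum_congr rfl fun b _ =>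
        Finset.sum_congr rfl fun v _ => ?_
      rw [hpoint a b v, hG]
    rw [this, hG, contract, Finset.mul_sum]
  -- Step B : symmetrization.
  have hfact : (((n - 2) - 2 * ℓ').factorial : ℂ) = ((n - 2 * (ℓ' + 1)).factorial : ℂ) := by
    rw [hm]
  set permE : Equiv.Perm (Fin ((n - 2) - 2 * ℓ')) ≃ Equiv.Perm (Fin (n - 2 * (ℓ' + 1))) :=
    { toFun := fun σ => (E.symm.trans σ).trans (finCongr hm)
      invFun := fun σ' => (E.trans σ').trans (finCongr hm.symm)
      left_inv := by intro σ; ext x; simp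
      right_inv := by intro σ'; ext x; simp } with hpermE
  rw [irredComp, irredComp, symmetrize, symmetrize]
  have hterm : ∀ σ : Equiv.Perm (Fin ((n - 2) - 2 * ℓ')),
      contract (n - 2) ℓ' q' (lam j k ρ φ) ((fun i => h (Fin.cast hm i)) ∘ ⇑σ)
        = s * contract n (ℓ' + 1) Q φ (h ∘ ⇑(permE σ)) := by
    intro σ
    rw [hcontract (((fun i => h (Fin.cast hm i))) ∘ ⇑σ)]
    congr 1
  have hsum : ∑ σ : Equiv.Perm (Fin ((n - 2) - 2 * ℓ')),
      contract (n - 2) ℓ' q' (lam j k ρ φ) ((fun i => h (Fin.cast hm i)) ∘ ⇑σ)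
      = s * ∑ σ' : Equiv.Perm (Fin (n - 2 * (ℓ' + 1))),
          contract n (ℓ' + 1) Q φ (h ∘ ⇑σ') := by
    rw [Finset.sum_congr rfl fun σ _ => hterm σ, ← Finset.mul_sum]
    congr 1
    exact Equiv.sum_comp permE (fun σ' => contract n (ℓ' + 1) Q φ (h ∘ ⇑σ'))
  rw [hsum, hfact]
  ring

/-! ### The empty pairing computes the symmetrization -/

lemma empty_mem_Pairings {n : ℕ} : (∅ : Finset (Fin n × Fin n)) ∈ Pairings n 0 := by
  refine mem_Pairings.2 ⟨rfl, ?_, ?_⟩ <;> simp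

lemma freeSet_empty {n : ℕ} : freeSet (∅ : Finset (Fin n × Fin n)) = Finset.univ := by
  ext x
  simp [freeSet, support]

lemma enum_empty {n : ℕ} (i : Fin (n - 2 * 0)) :
    enum 0 (∅ : Finset (Fin n × Fin n)) i = ⟨i.1, i.2⟩ := by
  have hcard : (freeSet (∅ : Finset (Fin n × Fin n))).card = n - 2 * 0 :=
    card_freeSet empty_mem_Pairings
  have hmem : ∀ x : Fin (n - 2 * 0), (⟨x.1, x.2⟩ : Fin n) ∈ freeSet (∅ : Finset (Fin n × Fin n)) := by
    intro x; rw [freeSet_empty]; exact Finset.mem_univ _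
  have hmono : StrictMono (fun x : Fin (n - 2 * 0) => (⟨x.1, x.2⟩ : Fin n)) := by
    intro x y hxy; exact hxy
  have huniq := Finset.orderEmbOfFin_unique hcard hmem hmono
  rw [enum_eq_orderEmbOfFin hcard, ← huniq]

lemma contract_empty {n : ℕ} (φ : Spinor n) (g : Fin (n - 2 * 0) → Fin 2) :
    contract n 0 ∅ φ g = φ (fun x : Fin n => g ⟨x.1, x.2⟩) := by
  rw [contract]
  have hpt : ∀ u : Fin n → Fin 2,
      (∏ pr ∈ (∅ : Finset (Fin n × Fin n)), eps (u pr.1) (u pr.2)) *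
        (∏ i : Fin (n - 2 * 0), if u (enum 0 ∅ i) = g i then 1 else 0) * φ u
      = (if u = (fun x : Fin n => g ⟨x.1, x.2⟩) then 1 else 0) * φ u := by
    intro u
    rw [Finset.prod_empty, one_mul]
    congr 1
    rw [Finset.prod_boole]
    congr 1
    simp only [eq_iff_iff]
    constructor
    · intro hall
      funext x
      have := hall ⟨x.1, x.2⟩ (Finset.mem_univ _)
      rw [enum_empty] at this
      exact this
    · intro heq i _
      rw [enum_empty, heq]
  rw [Finset.sum_congr rfl fun u _ => hpt u]
  rw [Finset.sum_congr rfl fun u _ => (boole_mul _ _)]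
  rw [Finset.sum_ite_eq' Finset.univ (fun x : Fin n => g ⟨x.1, x.2⟩) φ]
  rw [if_pos (Finset.mem_univ _)]

lemma symmetrize_eq_irred_empty {n : ℕ} (φ : Spinor n) (f : Fin n → Fin 2) :
    symmetrize n φ f = irredComp n 0 ∅ φ (fun i => f (enum 0 ∅ i)) := by
  rw [irredComp]
  show symmetrize n φ f
      = symmetrize (n - 2 * 0) (contract n 0 ∅ φ) (fun i => f (enum 0 ∅ i))
  rw [symmetrize, symmetrize]
  show (1 / ((n.factorial : ℂ))) * ∑ σ : Equiv.Perm (Fin n), φ (f ∘ ⇑σ)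
      = (1 / ((n.factorial : ℂ))) *
        ∑ σ : Equiv.Perm (Fin n), contract n 0 ∅ φ ((fun i => f (enum 0 ∅ i)) ∘ ⇑σ)
  congr 1
  refine Finset.sum_congr rfl fun σ _ => ?_
  rw [contract_empty]
  congr 1
  funext x
  show f (σ x) = f (enum 0 ∅ (σ ⟨(x : ℕ), x.2⟩))
  rw [enum_empty]

/-! ### The generating family -/

def Bgen (n : ℕ) (ℓ : ℕ) (p q : Finset (Fin n × Fin n)) : Op n := fun φ f =>
  (∏ pr ∈ p, eps (f pr.1) (f pr.2)) * irredComp n ℓ q φ (fun i => f (enum ℓ p i))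

abbrev Jt (n : ℕ) := Fin (n / 2 + 1) × Finset (Fin n × Fin n) × Finset (Fin n × Fin n)

def Bfam (n : ℕ) (x : Jt n) : Op n :=
  if x.2.1 ∈ Pairings n (x.1 : ℕ) ∧ x.2.2 ∈ Pairings n (x.1 : ℕ)
  then Bgen n (x.1 : ℕ) x.2.1 x.2.2 else 0

def Thm (n : ℕ) : Prop :=
  ∃ c : (ℓ : ℕ) → Finset (Fin n × Fin n) → Finset (Fin n × Fin n) → ℂ,
    ∀ (φ : (Fin n → Fin 2) → ℂ) (f : Fin n → Fin 2),
      φ f = ∑ ℓ ∈ Finset.range (n / 2 + 1), ∑ p ∈ Pairings n ℓ,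
        (∏ pr ∈ p, eps (f pr.1) (f pr.2)) *
          (∑ q ∈ Pairings n ℓ, c ℓ p q * irredComp n ℓ q φ (fun i => f (enum ℓ p i)))

/-! ### Dop lies in the span of the Bfam -/

lemma Dop_mem_span_lt {n : ℕ} {j k : Fin n} (hjk : j < k) (hT : Thm (n - 2))
    (ρ : Equiv.Perm (Fin n)) :
    Dop j k ρ ∈ Submodule.span ℂ (Set.range (Bfam n)) := by
  have h2n : 2 ≤ n := by
    have h1 := k.2
    have h2 : (j : ℕ) < (k : ℕ) := hjk
    omega
  obtain ⟨c', hc'⟩ := hT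
  have hgι : Function.Injective (iota j k) := iota_injective hjk
  have hjι : ∀ t, iota j k t ≠ j := fun t => (iota_mem hjk t).1
  have hkι : ∀ t, iota j k t ≠ k := fun t => (iota_mem hjk t).2
  have hjkne : j ≠ k := ne_of_lt hjk
  have hcovι : ∀ x : Fin n, x = j ∨ x = k ∨ ∃ t, iota j k t = x := by
    intro x
    by_cases h1 : x = j
    · exact Or.inl h1
    by_cases h2 : x = k
    · exact Or.inr (Or.inl h2)
    · exact Or.inr (Or.inr (iota_surj hjk h1 h2))
  set T : ℕ → Finset (Fin (n - 2) × Fin (n - 2)) → Finset (Fin (n - 2) × Fin (n - 2)) → Op n :=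
    fun ℓ' p' q' => fun φ f =>
      eps (f j) (f k) *
        ((∏ pr ∈ p', eps (f (iota j k pr.1)) (f (iota j k pr.2))) *
          (c' ℓ' p' q' *
            irredComp (n - 2) ℓ' q' (lam j k ρ φ)
              (fun i => f (iota j k (enum ℓ' p' i))))) with hTdef
  have hexp : Dop j k ρ
      = ∑ ℓ' ∈ Finset.range ((n - 2) / 2 + 1), ∑ p' ∈ Pairings (n - 2) ℓ',
          ∑ q' ∈ Pairings (n - 2) ℓ', T ℓ' p' q' := by
    funext φ f
    have happ : (∑ ℓ' ∈ Finset.range ((n - 2) / 2 + 1), ∑ p' ∈ Pairings (n - 2) ℓ',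
          ∑ q' ∈ Pairings (n - 2) ℓ', T ℓ' p' q') φ f
        = ∑ ℓ' ∈ Finset.range ((n - 2) / 2 + 1), ∑ p' ∈ Pairings (n - 2) ℓ',
          ∑ q' ∈ Pairings (n - 2) ℓ', T ℓ' p' q' φ f := by
      simp only [Finset.sum_apply]
    rw [happ, Dop_eq_lam hjk, hc' (lam j k ρ φ) (fun t => f (iota j k t)), Finset.mul_sum]
    refine Finset.sum_congr rfl fun ℓ' _ => ?_
    rw [Finset.mul_sum]
    refine Finset.sum_congr rfl fun p' _ => ?_
    rw [hTdef]
    simp only []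
    rw [Finset.mul_sum, Finset.mul_sum]
  rw [hexp]
  refine Submodule.sum_mem _ fun ℓ' hℓ' => Submodule.sum_mem _ fun p' hp' =>
    Submodule.sum_mem _ fun q' hq' => ?_
  -- now each term
  have hℓ'le : ℓ' ≤ (n - 2) / 2 := by
    rw [Finset.mem_range] at hℓ'
    omega
  have hm : (n - 2) - 2 * ℓ' = n - 2 * (ℓ' + 1) := by omega
  have hlt : ℓ' + 1 < n / 2 + 1 := by omega
  set P := mapP (iota j k) j k p' with hP
  set sP := mapSign (iota j k) j k p' with hsP
  have hPmem : P ∈ Pairings n (ℓ' + 1) := mapP_mem_Pairings hgι hjι hkι hjkne hp'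
  have harg := enum_mapP_mono hgι hjι hkι hjkne hp' hcovι hm (iota_strictMono hjk)
  obtain ⟨sQ, Q, hQmem, hirred⟩ := key_contract hjk ρ hq' hm
  have hterm : T ℓ' p' q' = (c' ℓ' p' q' * sP * sQ) • Bgen n (ℓ' + 1) P Q := by
    funext φ f
    rw [hTdef]
    simp only [Pi.smul_apply, smul_eq_mul]
    have heps := eps_prod_mapP (q := p') (j₀ := j) (k₀ := k) hgι hjι hp' f
    have hargf : (fun i => f (iota j k (enum ℓ' p' i)))
        = fun i => f (enum (ℓ' + 1) P (Fin.cast hm i)) := by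
      funext i; rw [harg i]
    rw [hargf, hirred φ (fun i' => f (enum (ℓ' + 1) P i'))]
    rw [Bgen]
    have h2 : eps (f j) (f k) * ∏ pr ∈ p', eps (f (iota j k pr.1)) (f (iota j k pr.2))
        = sP * ∏ pr ∈ P, eps (f pr.1) (f pr.2) := heps
    calc eps (f j) (f k) *
          ((∏ pr ∈ p', eps (f (iota j k pr.1)) (f (iota j k pr.2))) *
            (c' ℓ' p' q' * (sQ * irredComp n (ℓ' + 1) Q φ (fun i' => f (enum (ℓ' + 1) P i')))))
        = (eps (f j) (f k) * ∏ pr ∈ p', eps (f (iota j k pr.1)) (f (iota j k pr.2))) *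
            (c' ℓ' p' q' * (sQ * irredComp n (ℓ' + 1) Q φ (fun i' => f (enum (ℓ' + 1) P i')))) := by
          ring
      _ = (sP * ∏ pr ∈ P, eps (f pr.1) (f pr.2)) *
            (c' ℓ' p' q' * (sQ * irredComp n (ℓ' + 1) Q φ (fun i' => f (enum (ℓ' + 1) P i')))) := by
          rw [h2]
      _ = c' ℓ' p' q' * sP * sQ *
            ((∏ pr ∈ P, eps (f pr.1) (f pr.2)) *
              irredComp n (ℓ' + 1) Q φ (fun i' => f (enum (ℓ' + 1) P i'))) := by
          ring
  rw [hterm]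
  refine Submodule.smul_mem _ _ (Submodule.subset_span ?_)
  refine ⟨(⟨ℓ' + 1, hlt⟩, P, Q), ?_⟩
  rw [Bfam]
  exact if_pos ⟨hPmem, hQmem⟩

lemma Dop_mem_span {n : ℕ} (j k : Fin n) (ρ : Equiv.Perm (Fin n))
    (hT : 2 ≤ n → Thm (n - 2)) :
    Dop j k ρ ∈ Submodule.span ℂ (Set.range (Bfam n)) := by
  rcases lt_trichotomy j k with h | h | h
  · have h2n : 2 ≤ n := by
      have := k.2; have h2 : (j : ℕ) < (k : ℕ) := h; omega
    exact Dop_mem_span_lt h (hT h2n) ρ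
  · rw [h, Dop_diag]
    exact Submodule.zero_mem _
  · have h2n : 2 ≤ n := by
      have := j.2; have h2 : (k : ℕ) < (j : ℕ) := h; omega
    rw [Dop_comm (ne_of_gt h) ρ]
    exact Dop_mem_span_lt h (hT h2n) ρ

lemma id_mem_span {n : ℕ} (hT : 2 ≤ n → Thm (n - 2)) :
    (fun (φ : Spinor n) (f : Fin n → Fin 2) => φ f) ∈
      Submodule.span ℂ (Set.range (Bfam n)) := by
  have hid : (fun (φ : Spinor n) (f : Fin n → Fin 2) => φ f)
      = (fun (φ : Spinor n) (f : Fin n → Fin 2) => φ f - symmetrize n φ f)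
        + (fun (φ : Spinor n) (f : Fin n → Fin 2) => symmetrize n φ f) := by
    funext φ f
    show φ f = (φ f - symmetrize n φ f) + symmetrize n φ f
    ring
  rw [hid]
  refine Submodule.add_mem _ ?_ ?_
  · refine Submodule.span_le.2 ?_ (id_sub_sym_mem)
    rintro op ⟨x, rfl⟩
    exact Dop_mem_span x.1 x.2.1 x.2.2 hT
  · have hsym : (fun (φ : Spinor n) (f : Fin n → Fin 2) => symmetrize n φ f)
        = Bfam n (⟨0, Nat.succ_pos _⟩, ∅, ∅) := by
      funext φ f
      rw [Bfam, if_pos ⟨empty_mem_Pairings, empty_mem_Pairings⟩, Bgen]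
      rw [Finset.prod_empty, one_mul]
      exact symmetrize_eq_irred_empty φ f
    rw [hsym]
    exact Submodule.subset_span ⟨_, rfl⟩

lemma Thm_of_span {n : ℕ}
    (hs : (fun (φ : Spinor n) (f : Fin n → Fin 2) => φ f) ∈
      Submodule.span ℂ (Set.range (Bfam n))) : Thm n := by
  obtain ⟨c, hc⟩ := (Submodule.mem_span_range_iff_exists_fun ℂ).1 hs
  refine ⟨fun ℓ p q => if hℓ : ℓ < n / 2 + 1 then
    (if p ∈ Pairings n ℓ ∧ q ∈ Pairings n ℓ then c (⟨ℓ, hℓ⟩, p, q) else 0) else 0, ?_⟩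
  intro φ f
  have happ : φ f = ∑ x : Jt n, c x * Bfam n x φ f := by
    have := congrFun (congrFun hc φ) f
    rw [← this]
    simp only [Finset.sum_apply, Pi.smul_apply, smul_eq_mul]
  rw [happ, Fintype.sum_prod_type]
  rw [← Fin.sum_univ_eq_sum_range (fun ℓ => ∑ p ∈ Pairings n ℓ,
    (∏ pr ∈ p, eps (f pr.1) (f pr.2)) *
      (∑ q ∈ Pairings n ℓ, (if hℓ : ℓ < n / 2 + 1 then
        (if p ∈ Pairings n ℓ ∧ q ∈ Pairings n ℓ then c (⟨ℓ, hℓ⟩, p, q) else 0) else 0) *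
        irredComp n ℓ q φ (fun i => f (enum ℓ p i)))) (n / 2 + 1)]
  refine Finset.sum_congr rfl fun ℓf _ => ?_
  rw [Fintype.sum_prod_type]
  -- now fix ℓf : Fin (n/2+1); goal : ∑ p ∈ Pairings, ... = ∑ p : Finset, ∑ q : Finset, ...
  have hstep : ∀ p : Finset (Fin n × Fin n),
      ∑ q : Finset (Fin n × Fin n), c (ℓf, p, q) * Bfam n (ℓf, p, q) φ f
      = if p ∈ Pairings n (ℓf : ℕ) then
          (∏ pr ∈ p, eps (f pr.1) (f pr.2)) *
            (∑ q ∈ Pairings n (ℓf : ℕ), (if hℓ : (ℓf : ℕ) < n / 2 + 1 then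
              (if p ∈ Pairings n (ℓf : ℕ) ∧ q ∈ Pairings n (ℓf : ℕ)
                then c (⟨(ℓf : ℕ), hℓ⟩, p, q) else 0) else 0) *
              irredComp n (ℓf : ℕ) q φ (fun i => f (enum (ℓf : ℕ) p i)))
        else 0 := by
    intro p
    by_cases hp : p ∈ Pairings n (ℓf : ℕ)
    · rw [if_pos hp, Finset.mul_sum]
      rw [← Finset.sum_subset (Finset.subset_univ (Pairings n (ℓf : ℕ)))]
      · refine Finset.sum_congr rfl fun q hq => ?_
        rw [Bfam, if_pos ⟨hp, hq⟩, Bgen, dif_pos ℓf.2, if_pos ⟨hp, hq⟩]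
        have : (⟨(ℓf : ℕ), ℓf.2⟩ : Fin (n / 2 + 1)) = ℓf := Fin.ext rfl
        rw [this]
        ring
      · intro q _ hq
        rw [Bfam, if_neg (fun hh => hq hh.2)]
        show c (ℓf, p, q) * (0 : Op n) φ f = 0
        simp
    · rw [if_neg hp]
      refine Finset.sum_eq_zero fun q _ => ?_
      rw [Bfam, if_neg (fun hh => hp hh.1)]
      show c (ℓf, p, q) * (0 : Op n) φ f = 0
      simp
  rw [Finset.sum_congr rfl fun p _ => hstep p]
  rw [Finset.sum_ite_mem Finset.univ (Pairings n (ℓf : ℕ)) _]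
  rw [Finset.univ_inter]

theorem decomposition (n : ℕ) : Thm n := by
  induction n using Nat.strong_induction_on with
  | _ n ih =>
    exact Thm_of_span (id_mem_span (fun h2n => ih (n - 2) (by omega)))

end SpinorDecomp

/-- Irreducible decomposition with explicit expression of the symmetric parts in terms of the
irreducible components: there are coefficients `c(ℓ, p, q)`, depending only on `n`, `ℓ` and the
pairings (not on `φ`), such that every valence-`n` spinor `φ` decomposes as
`φ(f) = ∑_{2ℓ≤n} ∑_p (∏_{(j,k)∈p} ε_{f j, f k}) ψ_p(f|free)` with
`ψ_p = ∑_q c(ℓ,p,q) φ^{(q)}`. -/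
theorem irreducible_decomposition_coefficients (n : ℕ) :
    ∃ c : (ℓ : ℕ) → Finset (Fin n × Fin n) → Finset (Fin n × Fin n) → ℂ,
      ∀ (φ : (Fin n → Fin 2) → ℂ) (f : Fin n → Fin 2),
        φ f = ∑ ℓ ∈ Finset.range (n / 2 + 1), ∑ p ∈ Pairings n ℓ,
          (∏ pr ∈ p, eps (f pr.1) (f pr.2)) *
            (∑ q ∈ Pairings n ℓ, c ℓ p q * irredComp n ℓ q φ (fun i => f (enum ℓ p i))) := by
  exact SpinorDecomp.decomposition n

end
end

section
/- Let n ≥ 1 and let φ : (Fin n → Fin 2) → ℂ be a valence-n spinor. Let Ψ denote φ symmetrized over its last n−1 slots: Ψ(A; B₂,…,Bₙ) := (1/(n−1)!) ∑_{σ ∈ Sym of the last n−1 slots} φ(A, B_{σ(2)},…,B_{σ(n)}), and define the contracted spinor TrΨ on n−2 arguments by TrΨ(g) := ∑_{Q,R} ε^{Q R} · Ψ(R; Q, g). Then for all A₁,…,Aₙ : Fin 2, φ_{(A₁⋯Aₙ)}(A₁,…,Aₙ) = Ψ(A₁; A₂,…,Aₙ) + (1/n) ∑_{k=2}^{n} (ε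 A₁ A_k) · TrΨ(A₂,…,A_{k−1},A_{k+1},…,Aₙ). (This is the key formula φ_{(AB⋯F)} = φ_{A(B⋯F)} + (1/n) ∑ ε_{AA_k} φ^Q{}_{(Q ⋯)} in the proof of the irreducible decomposition.) -/
noncomputable section

/-- `Ψ(A; B₂,…,Bₙ)`: the spinor `φ` (of valence `n = m+1`) symmetrized over its last
`n − 1 = m` slots. -/
def Ψ (m : ℕ) (φ : (Fin (m + 1) → Fin 2) → ℂ) (A : Fin 2) (b : Fin m → Fin 2) : ℂ :=
  (1 / (m.factorial : ℂ)) * ∑ σ : Equiv.Perm (Fin m), φ (Fin.cons A (b ∘ σ))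

lemma psi_sum (m : ℕ) (φ : (Fin (m + 1) → Fin 2) → ℂ) (A : Fin 2) (b : Fin m → Fin 2) :
    ∑ σ : Equiv.Perm (Fin m), φ (Fin.cons A (b ∘ σ)) = (m.factorial : ℂ) * Ψ m φ A b := by
  have h : (m.factorial : ℂ) ≠ 0 := Nat.cast_ne_zero.2 m.factorial_ne_zero
  rw [Ψ]
  field_simp

/-- The 2-component exchange identity. -/
lemma exchange (F : Fin 2 → Fin 2 → ℂ) (X Y : Fin 2) :
    F Y X = F X Y + eps X Y * (∑ Q : Fin 2, ∑ R : Fin 2, eps Q R * F R Q) := by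
  fin_cases X <;> fin_cases Y <;> simp [eps, Fin.sum_univ_succ]

/-- The key formula `φ_{(A B ⋯ F)} = φ_{A(B⋯F)} + (1/n) ∑_k ε_{A A_k} φ^Q{}_{(Q ⋯)}` in the
proof of the irreducible decomposition.  Here `n = m + 1`, the first argument of `φ` is `A`
and the remaining ones are given by `a : Fin m → Fin 2`; the contracted spinor
`TrΨ(A₂,…,Â_k,…,Aₙ) = ∑_{Q,R} ε^{QR} Ψ(R; Q, A₂,…,Â_k,…,Aₙ)` is expressed (using the manifest
symmetry of `Ψ` in its last `m` slots) by inserting `Q` at slot `k` via `Function.update`. -/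
theorem symmetrization_splitting (m : ℕ) (φ : (Fin (m + 1) → Fin 2) → ℂ)
    (A : Fin 2) (a : Fin m → Fin 2) :
    symmetrize (m + 1) φ (Fin.cons A a) =
      Ψ m φ A a +
        (1 / ((m : ℂ) + 1)) * ∑ k : Fin m, eps A (a k) *
          (∑ Q : Fin 2, ∑ R : Fin 2, eps Q R * Ψ m φ R (Function.update a k Q)) := by
  classical
  -- Step 1: decompose the big sum
  have hsum : ∑ σ : Equiv.Perm (Fin (m + 1)), φ (Fin.cons A a ∘ σ)
      = (m.factorial : ℂ) * (Ψ m φ A a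
          + ∑ q : Fin m, Ψ m φ (a q) (Function.update a q A)) := by
    rw [Fintype.sum_equiv Equiv.Perm.decomposeFin
        (fun σ => φ (Fin.cons A a ∘ σ))
        (fun pe => φ (Fin.cons A a ∘ Equiv.Perm.decomposeFin.symm pe))
        (fun σ => by simp)]
    rw [Fintype.sum_prod_type, Fin.sum_univ_succ]
    have h0 : ∀ e : Equiv.Perm (Fin m),
        Fin.cons A a ∘ Equiv.Perm.decomposeFin.symm (0, e) = Fin.cons A (a ∘ e) := by
      intro e
      funext i
      refine Fin.cases ?_ (fun j => ?_) i
      · simp [Equiv.Perm.decomposeFin_symm_apply_zero]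
      · simp [Equiv.Perm.decomposeFin_symm_apply_succ]
    have hq : ∀ (q : Fin m) (e : Equiv.Perm (Fin m)),
        Fin.cons A a ∘ Equiv.Perm.decomposeFin.symm (q.succ, e)
          = Fin.cons (a q) ((Function.update a q A) ∘ e) := by
      intro q e
      funext i
      refine Fin.cases ?_ (fun j => ?_) i
      · simp [Equiv.Perm.decomposeFin_symm_apply_zero]
      · simp only [Function.comp_apply, Equiv.Perm.decomposeFin_symm_apply_succ,
          Fin.cons_succ]
        by_cases h : e j = q
        · rw [h, Equiv.swap_apply_right]
          simp [h, Function.update]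
        · rw [Equiv.swap_apply_of_ne_of_ne (Fin.succ_ne_zero _)
            (fun hc => h (Fin.succ_injective _ hc))]
          simp [Function.update, h]
    simp only [h0]
    rw [psi_sum]
    have : ∀ q : Fin m, ∑ e : Equiv.Perm (Fin m),
        φ (Fin.cons A a ∘ Equiv.Perm.decomposeFin.symm (Fin.succ q, e))
        = (m.factorial : ℂ) * Ψ m φ (a q) (Function.update a q A) := by
      intro q
      simp only [hq]
      exact psi_sum m φ (a q) (Function.update a q A)
    rw [Finset.sum_congr rfl (fun q _ => this q)]
    rw [← Finset.mul_sum, mul_add]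
  -- Step 2: exchange identity on each term
  have hex : ∀ q : Fin m, Ψ m φ (a q) (Function.update a q A)
      = Ψ m φ A a + eps A (a q) *
          (∑ Q : Fin 2, ∑ R : Fin 2, eps Q R * Ψ m φ R (Function.update a q Q)) := by
    intro q
    have := exchange (fun X Y => Ψ m φ X (Function.update a q Y)) A (a q)
    simpa [Function.update_eq_self] using this
  have hm1 : ((m : ℂ) + 1) ≠ 0 := by
    exact Nat.cast_add_one_ne_zero m
  have hmf : (m.factorial : ℂ) ≠ 0 := Nat.cast_ne_zero.2 m.factorial_ne_zero
  rw [symmetrize, hsum]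
  rw [Finset.sum_congr rfl (fun q _ => hex q), Finset.sum_add_distrib,
    Finset.sum_const, Finset.card_univ, Fintype.card_fin]
  have hfac : ((m + 1).factorial : ℂ) = ((m : ℂ) + 1) * (m.factorial : ℂ) := by
    rw [Nat.factorial_succ]; push_cast; ring
  rw [hfac]
  field_simp
  ring
end
end

section
/- Let n ≥ 1, let φ : (Fin n → Fin 2) → ℂ be a nonzero valence-n spinor, and let ξ : Matrix (Fin 2) (Fin 2) ℂ (components ξ_{A A'}, first index unprimed, second primed). Suppose that for every A' : Fin 2 and every assignment g of the last n−1 indices, ∑_{Q,R} ε^{Q R} · ξ R A' · φ(Q, g) = 0 (i.e. ξ^Q{}_{A'} φ_{Q A₂⋯Aₙ} = 0, so φ lies in the kernel of the symbol σ_ξ of the massless spin equation). Then ∑_{P,Q,P',Q'} ε^{P Q} · ε^{P' Q'} · ξ P P' · ξ Q Q' = 0; equivalently det ξ = 0 (the covector ξ is null). -/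
noncomputable section

/-- If a nonzero valence-`n` spinor (`n = m + 1 ≥ 1`) lies in the kernel of the symbol of the
massless spin equation, i.e. `ξ^Q{}_{A'} φ_{Q A₂⋯Aₙ} = 0`, then
`|ξ|² = ∑ ε^{PQ} ε^{P'Q'} ξ_{PP'} ξ_{QQ'} = 0`; equivalently `det ξ = 0` (the covector is null). -/
theorem kernel_symbol_implies_null (m : ℕ) (φ : (Fin (m + 1) → Fin 2) → ℂ) (hφ : φ ≠ 0)
    (ξ : Matrix (Fin 2) (Fin 2) ℂ)
    (h : ∀ (A' : Fin 2) (g : Fin m → Fin 2),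
      ∑ Q : Fin 2, ∑ R : Fin 2, eps Q R * ξ R A' * φ (Fin.cons Q g) = 0) :
    (∑ P : Fin 2, ∑ Q : Fin 2, ∑ P' : Fin 2, ∑ Q' : Fin 2,
        eps P Q * eps P' Q' * ξ P P' * ξ Q Q') = 0 ∧ ξ.det = 0 := by
  obtain ⟨f, hf⟩ := Function.ne_iff.mp hφ
  set g := Fin.tail f with hg
  have h0 := h 0 g
  have h1 := h 1 g
  simp only [Fin.sum_univ_two, eps, Fin.zero_eta, Fin.mk_one] at h0 h1 ⊢
  norm_num at h0 h1
  set a := φ (Fin.cons 0 g) with ha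
  set b := φ (Fin.cons 1 g) with hb
  have hab : a ≠ 0 ∨ b ≠ 0 := by
    have hfc : Fin.cons (f 0) g = f := Fin.cons_self_tail f
    have hf' : φ f ≠ 0 := by simpa using hf
    rcases Fin.exists_fin_two.mp ⟨f 0, rfl⟩ with h2 | h2 <;> [left; right] <;>
      · show φ _ ≠ 0
        rw [← h2, hfc]; exact hf'
  have hdet : ξ.det = 0 := by
    rw [Matrix.det_fin_two]
    rcases hab with hA | hB
    · have : (ξ 0 0 * ξ 1 1 - ξ 0 1 * ξ 1 0) * a = 0 := by
        linear_combination ξ 0 0 * h1 - ξ 0 1 * h0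
      exact (mul_eq_zero.mp this).resolve_right hA
    · have : (ξ 0 0 * ξ 1 1 - ξ 0 1 * ξ 1 0) * b = 0 := by
        linear_combination ξ 1 0 * h1 - ξ 1 1 * h0
      exact (mul_eq_zero.mp this).resolve_right hB
  refine ⟨?_, hdet⟩
  rw [Matrix.det_fin_two] at hdet
  norm_num
  linear_combination 2 * hdet

end
end

section
/- Let T : Matrix (Fin 2) (Fin 2) ℂ be Hermitian and satisfy the adaptedness condition: for all A, B, ∑_{A'} τ_{AA'} · T B A' = (if A = B then 1 else 0). For κ : Fin 2 → ℂ define the Hermitian conjugate κ̂ A := ∑_{A'} τ_A{}^{A'} · conj (κ A'). Then Hermitian conjugation is an anti-involution up to sign: for every κ : Fin 2 → ℂ and every A : Fin 2, (κ̂)ˆ A = − κ A. -/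
open ComplexConjugate

noncomputable section

/-- `τ_{AA'} = ∑_{C,C'} ε_{CA} ε_{C'A'} τ^{CC'}`. -/
def tauLow (T : Matrix (Fin 2) (Fin 2) ℂ) (A A' : Fin 2) : ℂ :=
  ∑ C : Fin 2, ∑ C' : Fin 2, eps C A * eps C' A' * T C C'

/-- `τ_A{}^{A'} = ∑_B ε_{BA} τ^{BA'}`. -/
def tauMix (T : Matrix (Fin 2) (Fin 2) ℂ) (A A' : Fin 2) : ℂ :=
  ∑ B : Fin 2, eps B A * T B A'

/-- The Hermitian conjugate `κ̂_A = τ_A{}^{A'} κ̄_{A'}` of a valence-1 spinor. -/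
def hermConj (T : Matrix (Fin 2) (Fin 2) ℂ) (κ : Fin 2 → ℂ) (A : Fin 2) : ℂ :=
  ∑ A' : Fin 2, tauMix T A A' * conj (κ A')

/-- Hermitian conjugation is an anti-involution: `(κ̂)ˆ_A = −κ_A`, for `τ` Hermitian
and adapted (`τ_{AA'} τ^{BA'} = δ_A{}^B`). -/
theorem hermConj_hermConj (T : Matrix (Fin 2) (Fin 2) ℂ)
    (hherm : ∀ A A' : Fin 2, T A A' = conj (T A' A))
    (hadapt : ∀ A B : Fin 2, ∑ A' : Fin 2, tauLow T A A' * T B A' = if A = B then 1 else 0)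
    (κ : Fin 2 → ℂ) (A : Fin 2) :
    hermConj T (hermConj T κ) A = - κ A := by
  have h11 := hadapt 1 1
  have hb := hherm 0 1
  have ha := hherm 0 0
  have hd := hherm 1 1
  have hb2 : conj (T 0 1) = T 1 0 := by rw [hb, Complex.conj_conj]
  simp only [tauLow, eps, Fin.sum_univ_two] at h11
  norm_num at h11
  fin_cases A <;>
    · simp only [hermConj, tauMix, eps, Fin.sum_univ_two, map_add, map_mul, map_neg, map_one,
        Complex.conj_conj]
      norm_num
      rw [hb2, ← hb, ← ha, ← hd]
      first
        | linear_combination (-(κ 0)) * h11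
        | linear_combination (-(κ 1)) * h11

end
end

section
/- Let T : Matrix (Fin 2) (Fin 2) ℂ be Hermitian and satisfy the adaptedness condition: for all A, B, ∑_{A'} τ_{AA'} · T B A' = (if A = B then 1 else 0). Let m ≥ 1 and let φ : (Fin m → Fin 2) → ℂ be a totally symmetric valence-m spinor (invariant under all permutations of its arguments), thought of as the components φ̄_{A'₁⋯A'ₘ} after conjugation. Define its Hermitian conjugate φ̂ : (Fin m → Fin 2) → ℂ by φ̂(P₁,…,Pₘ) := ∑_{A'₁,…,A'ₘ} (∏_{j=1}^m τ_{P_j}{}^{A'_j}) · conj (φ(A'₁,…,A'ₘ)). Then for all A'₁,…,A'ₘ : Fin 2, conj (φ(A'₁,…,A'ₘ)) = (−1)^m · ∑_{P₁,…,Pₘ} (∏_{j=1}^m τ^{P_j}{}_{A'_j}) · φ̂(P₁,…,Pₘ). (Hermitian conjugation can be reversed: φ̄_{A'₁⋯A'ₘ} = (−1)^m τ^{P₁}{}_{A'₁} ⋯ τ^{Pₘ}{}_{A'ₘ} φ̂_{P₁⋯Pₘ}.) -/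
open ComplexConjugate

noncomputable section

/-- `τ^A{}_{A'} = ∑_{B'} τ^{AB'} ε_{B'A'}`. -/
def tauMix' (T : Matrix (Fin 2) (Fin 2) ℂ) (A A' : Fin 2) : ℂ :=
  ∑ B' : Fin 2, T A B' * eps B' A'

/-- Hermitian conjugate of a valence-`m` (primed) spinor:
`φ̂_{P₁⋯Pₘ} = τ_{P₁}{}^{A'₁} ⋯ τ_{Pₘ}{}^{A'ₘ} φ̄_{A'₁⋯A'ₘ}`. -/
def hermConjM (T : Matrix (Fin 2) (Fin 2) ℂ) (m : ℕ) (φ : (Fin m → Fin 2) → ℂ) :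
    (Fin m → Fin 2) → ℂ :=
  fun P => ∑ A' : Fin m → Fin 2, (∏ j : Fin m, tauMix T (P j) (A' j)) * conj (φ A')

lemma eps00 : eps 0 0 = 0 := rfl
lemma eps01 : eps 0 1 = 1 := rfl
lemma eps10 : eps 1 0 = -1 := rfl
lemma eps11 : eps 1 1 = 0 := rfl
lemma f01 : ((0 : Fin 2) = 1) = False := by decide
lemma f10 : ((1 : Fin 2) = 0) = False := by decide
lemma fin2cases (A : Fin 2) : A = 0 ∨ A = 1 := by omega

lemma det_one (T : Matrix (Fin 2) (Fin 2) ℂ)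
    (hadapt : ∀ A B : Fin 2, ∑ A' : Fin 2, tauLow T A A' * T B A' = if A = B then 1 else 0) :
    T 0 0 * T 1 1 - T 0 1 * T 1 0 = 1 := by
  have h := hadapt 0 0
  simp only [tauLow, Fin.sum_univ_two, eps00, eps01, eps10, eps11, reduceIte] at h
  linear_combination h

lemma key (T : Matrix (Fin 2) (Fin 2) ℂ)
    (hdet : T 0 0 * T 1 1 - T 0 1 * T 1 0 = 1) (A' B' : Fin 2) :
    ∑ P : Fin 2, tauMix' T P A' * tauMix T P B' = -(if A' = B' then 1 else 0) := by
  rcases fin2cases A' with h1 | h1 <;> rcases fin2cases B' with h2 | h2 <;> subst h1 <;> subst h2 <;>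
    simp only [tauMix, tauMix', Fin.sum_univ_two, eps00, eps01, eps10, eps11, reduceIte,
      f01, f10, if_false] <;>
    first | ring1 | linear_combination (-1 : ℂ) * hdet

/-- Hermitian conjugation can be reversed on symmetric spinors:
`φ̄_{A'₁⋯A'ₘ} = (−1)^m τ^{P₁}{}_{A'₁} ⋯ τ^{Pₘ}{}_{A'ₘ} φ̂_{P₁⋯Pₘ}`, for `τ` Hermitian
and adapted (`τ_{AA'} τ^{BA'} = δ_A{}^B`). -/
theorem hermConj_reversal (T : Matrix (Fin 2) (Fin 2) ℂ)
    (hherm : ∀ A A' : Fin 2, T A A' = conj (T A' A))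
    (hadapt : ∀ A B : Fin 2, ∑ A' : Fin 2, tauLow T A A' * T B A' = if A = B then 1 else 0)
    (m : ℕ) (hm : 1 ≤ m) (φ : (Fin m → Fin 2) → ℂ)
    (hsym : ∀ (σ : Equiv.Perm (Fin m)) (g : Fin m → Fin 2), φ (g ∘ σ) = φ g) :
    ∀ A' : Fin m → Fin 2,
      conj (φ A') = (-1 : ℂ) ^ m *
        ∑ P : Fin m → Fin 2, (∏ j : Fin m, tauMix' T (P j) (A' j)) * hermConjM T m φ P := by
  intro A'
  have hdet := det_one T hadapt
  have step1 : ∀ P : Fin m → Fin 2,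
      (∏ j : Fin m, tauMix' T (P j) (A' j)) * hermConjM T m φ P
        = ∑ B' : Fin m → Fin 2,
            (∏ j : Fin m, tauMix' T (P j) (A' j) * tauMix T (P j) (B' j)) * conj (φ B') := by
    intro P
    rw [hermConjM, Finset.mul_sum]
    refine Finset.sum_congr rfl fun B' _ => ?_
    rw [Finset.prod_mul_distrib]
    ring
  simp_rw [step1]
  rw [Finset.sum_comm]
  have step2 : ∀ B' : Fin m → Fin 2,
      ∑ P : Fin m → Fin 2, (∏ j : Fin m, tauMix' T (P j) (A' j) * tauMix T (P j) (B' j))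
        = ∏ j : Fin m, ∑ p : Fin 2, tauMix' T p (A' j) * tauMix T p (B' j) := by
    intro B'
    rw [Finset.prod_univ_sum (fun _ => (Finset.univ : Finset (Fin 2)))
      (fun j p => tauMix' T p (A' j) * tauMix T p (B' j))]
    rw [Fintype.piFinset_univ]
  have step3 : ∀ B' : Fin m → Fin 2,
      (∏ j : Fin m, ∑ p : Fin 2, tauMix' T p (A' j) * tauMix T p (B' j))
        = (-1 : ℂ) ^ m * (if B' = A' then 1 else 0) := by
    intro B'
    have : ∀ j : Fin m, (∑ p : Fin 2, tauMix' T p (A' j) * tauMix T p (B' j))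
        = -(if A' j = B' j then 1 else 0) := fun j => key T hdet (A' j) (B' j)
    simp_rw [this]
    rw [Finset.prod_congr rfl (fun j _ => (neg_one_mul ((if A' j = B' j then (1:ℂ) else 0))).symm)]
    rw [Finset.prod_mul_distrib, Finset.prod_const, Finset.card_univ, Fintype.card_fin,
      Finset.prod_boole]
    have hiff : (∀ i ∈ Finset.univ, A' i = B' i) ↔ B' = A' := by
      constructor
      · intro h
        funext j
        exact (h j (Finset.mem_univ j)).symm
      · intro h j _
        rw [h]
    simp only [hiff]
  simp_rw [← Finset.sum_mul, step2, step3]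
  have final : ∑ B' : Fin m → Fin 2,
      ((-1 : ℂ) ^ m * (if B' = A' then 1 else 0)) * conj (φ B')
        = (-1 : ℂ) ^ m * conj (φ A') := by
    rw [Finset.sum_eq_single A']
    · simp
    · intro b _ hb
      simp [hb]
    · simp
  rw [final, ← mul_assoc, ← pow_add]
  rw [(Even.neg_one_pow ⟨m, rfl⟩ : ((-1 : ℂ)) ^ (m + m) = 1), one_mul]

end
end

section
/- Let o, ι : Fin 2 → ℂ be a normalized spin dyad, i.e. o 0 · ι 1 − o 1 · ι 0 = 1, and let T A A' := o A · conj (o A') + ι A · conj (ι A'). For κ : Fin 2 → ℂ define κ̂ A := ∑_{A'} τ_A{}^{A'} · conj (κ A') and κ̂^A := ∑_B ε^{A B} · κ̂ B. Then the pointwise Hermitian pairing N(κ) := ∑_A κ A · κ̂^A is a nonnegative real number, and N(κ) > 0 if and only if κ ≠ 0. (Positive definiteness of the Hermitian inner product induced by τ.) -/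
open ComplexConjugate

noncomputable section

/-- `κ̂^A = ∑_B ε^{AB} κ̂_B`. -/
def hermConjUp (T : Matrix (Fin 2) (Fin 2) ℂ) (κ : Fin 2 → ℂ) (A : Fin 2) : ℂ :=
  ∑ B : Fin 2, eps A B * hermConj T κ B

/-- The pointwise Hermitian pairing `N(κ) = ∑_A κ_A κ̂^A`. -/
def hermPairing (T : Matrix (Fin 2) (Fin 2) ℂ) (κ : Fin 2 → ℂ) : ℂ :=
  ∑ A : Fin 2, κ A * hermConjUp T κ A

/-- Positive definiteness of the Hermitian inner product induced by
`τ^{AA'} = o^A ō^{A'} + ι^A ῑ^{A'}` for a normalized spin dyad `{o, ι}`: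
`N(κ)` is a nonnegative real number, positive iff `κ ≠ 0`. -/
theorem hermPairing_pos_def (o ι : Fin 2 → ℂ)
    (hnorm : o 0 * ι 1 - o 1 * ι 0 = 1)
    (T : Matrix (Fin 2) (Fin 2) ℂ)
    (hT : ∀ A A' : Fin 2, T A A' = o A * conj (o A') + ι A * conj (ι A'))
    (κ : Fin 2 → ℂ) :
    (hermPairing T κ).im = 0 ∧ 0 ≤ (hermPairing T κ).re ∧
      (0 < (hermPairing T κ).re ↔ κ ≠ 0) := by
  set a : ℂ := κ 0 * o 0 + κ 1 * o 1 with ha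
  set b : ℂ := κ 0 * ι 0 + κ 1 * ι 1 with hb
  have key : hermPairing T κ =
      (Complex.normSq a : ℂ) + (Complex.normSq b : ℂ) := by
    rw [← Complex.mul_conj, ← Complex.mul_conj]
    simp only [hermPairing, hermConjUp, hermConj, tauMix, eps, Fin.sum_univ_two, hT,
      ha, hb, map_add, map_mul]
    norm_num
    ring
  have hre : (hermPairing T κ).re = Complex.normSq a + Complex.normSq b := by
    rw [key]; simp
  have him : (hermPairing T κ).im = 0 := by rw [key]; simp
  refine ⟨him, ?_, ?_⟩
  · rw [hre]; exact add_nonneg (Complex.normSq_nonneg a) (Complex.normSq_nonneg b)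
  · rw [hre]
    have hzero : a = 0 ∧ b = 0 → κ = 0 := by
      rintro ⟨h1, h2⟩
      have hk0 : κ 0 = 0 := by
        have : ι 1 * a - o 1 * b = κ 0 := by rw [ha, hb]; linear_combination κ 0 * hnorm
        rw [h1, h2] at this; simpa using this.symm
      have hk1 : κ 1 = 0 := by
        have : o 0 * b - ι 0 * a = κ 1 := by rw [ha, hb]; linear_combination κ 1 * hnorm
        rw [h1, h2] at this; simpa using this.symm
      funext i; fin_cases i <;> simp [hk0, hk1]
    constructor
    · intro hpos hk
      rw [hk] at ha hb
      simp only [Pi.zero_apply, zero_mul, add_zero] at ha hb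
      rw [ha, hb] at hpos
      simp at hpos
    · intro hk
      rcases not_and_or.1 (fun h => hk (hzero h)) with h | h
      · have h1 : 0 < Complex.normSq a := by simpa [Complex.normSq_pos] using h
        have := Complex.normSq_nonneg b
        linarith
      · have h1 : 0 < Complex.normSq b := by simpa [Complex.normSq_pos] using h
        have := Complex.normSq_nonneg a
        linarith

end
end

section
/- Let T : Matrix (Fin 2) (Fin 2) ℂ be Hermitian and satisfy the adaptedness condition: for all A, B, ∑_{A'} τ_{AA'} · T B A' = (if A = B then 1 else 0). Then the Hermitian conjugate of the antisymmetric spinor ε equals ε: for all A, B : Fin 2, ∑_{A',B'} τ_A{}^{A'} · τ_B{}^{B'} · conj (ε A' B') = ε A B (i.e. ε̂_{AB} = ε_{AB}). -/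
open ComplexConjugate

noncomputable section

private lemma det_aux1 {a b c d : ℂ} (h : d * a + -(c * b) = 1) :
    -(c * b) + d * a = 1 := by linear_combination h

private lemma det_aux2 {a b c d : ℂ} (h : d * a + -(c * b) = 1) :
    -(a * d) + b * c = -1 := by linear_combination -h

/-- The Hermitian conjugate of the antisymmetric spinor equals itself:
`ε̂_{AB} = τ_A{}^{A'} τ_B{}^{B'} ε̄_{A'B'} = ε_{AB}`, for `τ` Hermitian and adapted. -/
theorem hermConj_eps (T : Matrix (Fin 2) (Fin 2) ℂ)
    (hherm : ∀ A A' : Fin 2, T A A' = conj (T A' A))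
    (hadapt : ∀ A B : Fin 2, ∑ A' : Fin 2, tauLow T A A' * T B A' = if A = B then 1 else 0) :
    ∀ A B : Fin 2,
      ∑ A' : Fin 2, ∑ B' : Fin 2, tauMix T A A' * tauMix T B B' * conj (eps A' B')
        = eps A B := by
  have h := hadapt 0 0
  simp [tauLow, eps, Fin.sum_univ_two] at h
  intro A B
  fin_cases A <;> fin_cases B <;>
    simp [tauMix, eps, Fin.sum_univ_two]
  · ring
  · exact det_aux1 h
  · exact det_aux2 h
  · ring

end
end

section
/- Let T : Matrix (Fin 2) (Fin 2) ℂ be Hermitian and satisfy the adaptedness condition: for all A, B, ∑_{A'} τ_{AA'} · T B A' = (if A = B then 1 else 0). Let ξ : Matrix (Fin 2) (Fin 2) ℂ (components ξ_{A A'}) be Hermitian, i.e. conj (ξ A A') = ξ A' A for all A, A'. Define the scalar ξˢ := ∑_{A,A'} T A A' · ξ A A' (i.e. ξ = τ^{AA'} ξ_{AA'}) and the space-spinor part ξ_sp(A,B) := (1/2) ∑_{A'} (τ_B{}^{A'} · ξ A A' + τ_A{}^{A'} · ξ B A') (i.e. ξ_{AB} = τ_{(B}{}^{A'} ξ_{A)A'}).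 Then: (i) ξˢ is real; (ii) ξ_sp satisfies the reality condition ξ̂_sp = −ξ_sp, i.e. for all A, B, ∑_{a,b} τ_A{}^{a} · τ_B{}^{b} · conj (ξ_sp(a,b)) = − ξ_sp(A,B); and (iii) the space-spinor decomposition holds: for all A, A', ξ A A' = (1/2) · ξˢ · τ_{AA'} − ∑_Q τ^Q{}_{A'} · ξ_sp(A,Q). -/
open ComplexConjugate

noncomputable section

/-- The scalar `ξ = τ^{AA'} ξ_{AA'}`. -/
def xiScalar (T ξ : Matrix (Fin 2) (Fin 2) ℂ) : ℂ :=
  ∑ A : Fin 2, ∑ A' : Fin 2, T A A' * ξ A A'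

/-- The space-spinor part `ξ_{AB} = τ_{(B}{}^{A'} ξ_{A)A'}`. -/
def xiSp (T ξ : Matrix (Fin 2) (Fin 2) ℂ) (A B : Fin 2) : ℂ :=
  (1 / 2) * ∑ A' : Fin 2, (tauMix T B A' * ξ A A' + tauMix T A A' * ξ B A')

/-- Space-spinor decomposition of a Hermitian covector `ξ_{AA'}` with respect to a
Hermitian adapted `τ`: the scalar part `ξ = τ^{AA'} ξ_{AA'}` is real, the symmetric part
`ξ_{AB}` satisfies the reality condition `ξ̂_{AB} = −ξ_{AB}`, and
`ξ_{AA'} = (1/2) ξ τ_{AA'} − τ^Q{}_{A'} ξ_{AQ}`. -/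
theorem spaceSpinor_decomposition_of_covector (T : Matrix (Fin 2) (Fin 2) ℂ)
    (hherm : ∀ A A' : Fin 2, T A A' = conj (T A' A))
    (hadapt : ∀ A B : Fin 2, ∑ A' : Fin 2, tauLow T A A' * T B A' = if A = B then 1 else 0)
    (ξ : Matrix (Fin 2) (Fin 2) ℂ)
    (hξ : ∀ A A' : Fin 2, conj (ξ A A') = ξ A' A) :
    (xiScalar T ξ).im = 0 ∧
    (∀ A B : Fin 2,
      ∑ a : Fin 2, ∑ b : Fin 2, tauMix T A a * tauMix T B b * conj (xiSp T ξ a b)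
        = - xiSp T ξ A B) ∧
    (∀ A A' : Fin 2,
      ξ A A' = (1 / 2) * xiScalar T ξ * tauLow T A A'
        - ∑ Q : Fin 2, tauMix' T Q A' * xiSp T ξ A Q) := by
  have hdet : T 0 0 * T 1 1 - T 0 1 * T 1 0 = 1 := by
    have h := hadapt 0 0
    simp [tauLow, eps, Fin.sum_univ_two] at h
    linear_combination h
  refine ⟨?_, ?_, ?_⟩
  · have hc : conj (xiScalar T ξ) = xiScalar T ξ := by
      simp only [xiScalar, Fin.sum_univ_two, map_add, map_mul, hξ, ← hherm]
      ring
    exact Complex.conj_eq_iff_im.mp hc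
  · intro A B
    fin_cases A <;> fin_cases B <;>
      simp only [xiSp, tauMix, eps, xiScalar, Fin.sum_univ_two, Fin.isValue,
        map_add, map_mul, map_neg, map_sub, map_one, map_div₀, map_ofNat,
        hξ, ← hherm] <;>
      norm_num <;>
      first
      | linear_combination (T 1 1 * ξ 0 1 + T 1 0 * ξ 0 0) * hdet
      | linear_combination ((1:ℂ)/2) * (T 1 1 * ξ 1 1 + T 1 0 * ξ 1 0
          - T 0 1 * ξ 0 1 - T 0 0 * ξ 0 0) * hdet
      | linear_combination (-(T 0 1 * ξ 1 1) - T 0 0 * ξ 1 0) * hdet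
  · intro A A'
    fin_cases A <;> fin_cases A' <;>
      simp only [xiSp, tauMix, tauMix', tauLow, eps, xiScalar, Fin.sum_univ_two,
        Fin.isValue] <;>
      norm_num <;>
      first
      | linear_combination (-(ξ 0 0)) * hdet
      | linear_combination (-(ξ 0 1)) * hdet
      | linear_combination (-(ξ 1 0)) * hdet
      | linear_combination (-(ξ 1 1)) * hdet

end
end
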